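/- arXiv:2309.10402 — 9 statements merged into one kernel-verified Lean document; each statement's English description precedes it below -/
import Mathlib

section
/- For any dimension n, compact set K ⊂ ℝⁿ, vectors a, c ∈ ℝⁿ with aᵀc > 0, and scalar b ∈ ℝ, there exists a function f : K → ℝⁿ expressible as f(x) = A⁻¹(ReLU(Ax + v) − v) for some invertible matrix A ∈ ℝⁿˣⁿ and vector v ∈ ℝⁿ (ReLU applied coordinatewise), such that f(x) = x whenever aᵀx + b ≥ 0, and f(x) = x − ((aᵀx + b)/(aᵀc))·c whenever aᵀx + b < 0. -/
open Matrix

/-- Coordinatewise ReLU. -/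
noncomputable def reluVec {n : ℕ} (v : Fin n → ℝ) : Fin n → ℝ := fun i => max (v i) 0

/-- For any compact `K ⊆ ℝⁿ`, `a, c` with `aᵀc > 0` and `b : ℝ`, there is a
map of the form `x ↦ A⁻¹ (ReLU (A x + v) − v)` with `A` invertible that realizes on `K`
the projection onto the half-space `{x : aᵀx + b ≥ 0}` along direction `c`. -/
theorem stmt0 (n : ℕ) (K : Set (Fin n → ℝ)) (hK : IsCompact K)
    (a c : Fin n → ℝ) (hac : 0 < a ⬝ᵥ c) (b : ℝ) :
    ∃ (A : Matrix (Fin n) (Fin n) ℝ) (v : Fin n → ℝ), IsUnit A ∧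
      ∀ x ∈ K,
        (A⁻¹.mulVec (reluVec (A.mulVec x + v) - v)) =
          (if 0 ≤ a ⬝ᵥ x + b then x else x - ((a ⬝ᵥ x + b) / (a ⬝ᵥ c)) • c) := by
  classical
  set s : ℝ := a ⬝ᵥ c with hs
  have hs0 : s ≠ 0 := ne_of_gt hac
  set r : Fin n → ℝ := fun k => a k / s with hr
  -- a ≠ 0
  have ha : ∃ j, a j ≠ 0 := by
    by_contra h
    push_neg at h
    have : a ⬝ᵥ c = 0 := by
      simp [dotProduct, h]
    exact hac.ne' this
  obtain ⟨j, hj⟩ := ha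
  have hrj : r j ≠ 0 := div_ne_zero hj hs0
  -- the matrix and its inverse
  set A : Matrix (Fin n) (Fin n) ℝ :=
    Matrix.of (fun i k => if i = j then r k else (if i = k then (1:ℝ) else 0) - c i * r k)
    with hA
  set A' : Matrix (Fin n) (Fin n) ℝ :=
    Matrix.of (fun m i => if i = j then c m else
      if m = j then -(r i) / r j else if m = i then (1:ℝ) else 0) with hA'
  have hrc : ∑ m, r m * c m = 1 := by
    have : ∑ m, r m * c m = (a ⬝ᵥ c) / s := by
      rw [dotProduct]
      rw [Finset.sum_div]
      exact Finset.sum_congr rfl fun m _ => by rw [hr]; ring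
    rw [this, div_self hs0]
  have sum1 : ∀ k, ∑ m, r m * A' m k = if k = j then 1 else 0 := by
    intro k
    by_cases hk : k = j
    · simp only [hk, if_pos rfl, hA', Matrix.of_apply, if_pos rfl]
      exact hrc
    · simp only [if_neg hk]
      have : ∀ m, r m * A' m k =
          (r j * (-(r k) / r j)) * (if m = j then 1 else 0)
            + r k * (if m = k then 1 else 0) := by
        intro m
        simp only [hA', Matrix.of_apply, if_neg hk]
        by_cases hmj : m = j
        · subst hmj
          have : m ≠ k := fun h => hk h.symm
          simp [this]
        · by_cases hmk : m = k
          · subst hmk; simp [hmj]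
          · simp [hmj, hmk]
      rw [Finset.sum_congr rfl fun m _ => this m, Finset.sum_add_distrib]
      simp only [mul_ite, mul_one, mul_zero, Finset.sum_ite_eq', Finset.mem_univ, if_pos]
      field_simp
      ring
  have hAA' : A * A' = 1 := by
    ext i k
    rw [Matrix.mul_apply]
    by_cases hij : i = j
    · subst hij
      have : ∀ m, A i m * A' m k = r m * A' m k := by
        intro m; simp [hA]
      rw [Finset.sum_congr rfl fun m _ => this m, sum1 k]
      by_cases hk : k = i
      · subst hk; rw [if_pos rfl, Matrix.one_apply_eq]
      · rw [if_neg hk, Matrix.one_apply_ne (fun h => hk h.symm)]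
    · have : ∀ m, A i m * A' m k =
          (if i = m then 1 else 0) * A' m k - c i * (r m * A' m k) := by
        intro m; simp only [hA, Matrix.of_apply, if_neg hij]; ring
      rw [Finset.sum_congr rfl fun m _ => this m, Finset.sum_sub_distrib]
      rw [← Finset.mul_sum, sum1 k]
      simp only [ite_mul, one_mul, zero_mul, Finset.sum_ite_eq, Finset.mem_univ, if_pos]
      by_cases hk : k = j
      · subst hk
        simp [hA', Matrix.one_apply, hij, fun h : i = k => hij h]
      · simp only [hA', Matrix.of_apply, if_neg hk, if_neg hij, mul_zero, sub_zero]
        by_cases hik : i = k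
        · simp [hik, Matrix.one_apply]
        · simp [hik, Matrix.one_apply, hij]
  have hUnit : IsUnit A := ⟨⟨A, A', hAA', mul_eq_one_comm.mp hAA'⟩, rfl⟩
  have hInv : A⁻¹ = A' := Matrix.inv_eq_right_inv hAA'
  have hA'A : A' * A = 1 := mul_eq_one_comm.mp hAA'
  -- bound on K
  obtain ⟨R0, hR0⟩ := hK.isBounded.subset_closedBall 0
  set R : ℝ := max R0 0 with hRdef
  have hR : ∀ x ∈ K, ‖x‖ ≤ R := fun x hx =>
    le_trans (by simpa [mem_closedBall_zero_iff] using hR0 hx) (le_max_left _ _)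
  -- the shift vector
  set v : Fin n → ℝ := fun i => if i = j then b / s else (∑ k, |A i k|) * R with hv
  refine ⟨A, v, hUnit, ?_⟩
  intro x hx
  have hbnd : ∀ i, i ≠ j → 0 ≤ A.mulVec x i + v i := by
    intro i hi
    have h1 : |A.mulVec x i| ≤ (∑ k, |A i k|) * R := by
      rw [Matrix.mulVec, dotProduct]
      calc |∑ k, A i k * x k| ≤ ∑ k, |A i k * x k| := Finset.abs_sum_le_sum_abs _ _
        _ ≤ ∑ k, |A i k| * R := by
            refine Finset.sum_le_sum fun k _ => ?_
            rw [abs_mul]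
            exact mul_le_mul_of_nonneg_left
              (le_trans (norm_le_pi_norm x k) (hR x hx)) (abs_nonneg _)
        _ = (∑ k, |A i k|) * R := by rw [Finset.sum_mul]
    have := neg_le_of_abs_le h1
    simp only [hv, if_neg hi]
    linarith
  set t : ℝ := (a ⬝ᵥ x + b) / s with ht
  have hAxj : A.mulVec x j = t - b / s := by
    have h1 : A.mulVec x j = (a ⬝ᵥ x) / s := by
      rw [Matrix.mulVec, dotProduct, dotProduct, Finset.sum_div]
      refine Finset.sum_congr rfl fun k _ => ?_
      have h2 : A j k = a k / s := if_pos rfl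
      rw [h2]; ring
    rw [h1, ht]; ring
  have key : reluVec (A.mulVec x + v) - v
      = A.mulVec x + (max t 0 - t) • (Pi.single j 1 : Fin n → ℝ) := by
    funext i
    by_cases hi : i = j
    · subst hi
      simp only [reluVec, Pi.sub_apply, Pi.add_apply, Pi.smul_apply, Pi.single_eq_same,
        smul_eq_mul, mul_one, hAxj, hv, if_pos rfl, eq_self_iff_true, if_true]
      have h3 : t - b / s + b / s = t := by ring
      rw [h3]; ring
    · simp only [reluVec, Pi.sub_apply, Pi.add_apply, Pi.smul_apply,
        Pi.single_eq_of_ne hi, smul_eq_mul, mul_zero, add_zero]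
      rw [max_eq_left (hbnd i hi)]
      ring
  rw [hInv, key, Matrix.mulVec_add, Matrix.mulVec_smul]
  have hAx : A'.mulVec (A.mulVec x) = x := by
    rw [Matrix.mulVec_mulVec, hA'A, Matrix.one_mulVec]
  have hsingle : A'.mulVec (Pi.single j 1) = c := by
    funext m
    rw [Matrix.mulVec_single]
    simp [hA']
  rw [hAx, hsingle]
  by_cases hpos : 0 ≤ a ⬝ᵥ x + b
  · rw [if_pos hpos]
    have ht0 : 0 ≤ t := div_nonneg hpos (le_of_lt hac)
    rw [max_eq_left ht0]
    simp
  · rw [if_neg hpos]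
    push_neg at hpos
    have ht0 : t < 0 := div_neg_of_neg_of_pos hpos hac
    rw [max_eq_right ht0.le]
    rw [ht, sub_eq_add_neg x, ← neg_smul]
    ring_nf
end

section
/- For any δ > 0 and any bounded set R₀ ⊂ ℝⁿ with diam(R₀) ≤ D for some D > δ, there exist k ∈ ℕ and pairs (c₁,d₁),…,(c_k,d_k) ∈ ℝⁿ × ℝ such that, setting R_i = R₀ ∩ ⋂_{j=1}^{i} {x : c_jᵀx + d_j ≥ 0}, one has diam(R_{i-1} \ R_i) ≤ δ for all i ∈ [k], and diam(R_k) ≤ max{D − δ²/(4D), 0}. -/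
open scoped RealInnerProductSpace
open Metric Bornology Set

namespace Stmt2Aux

variable {n : ℕ}

lemma cap_arith (δ D τ E dxy s : ℝ) (hδ : 0 < δ) (hτ : 0 < τ) (hτD : 24 * D * τ ≤ δ ^ 2)
    (hED : E ≤ D) (hEpos : 0 < E) (hE11 : 0 ≤ E - 11 * τ / 4) (hdxy : 0 ≤ dxy)
    (h : s * s + dxy * dxy ≤ 4 * (E * E)) (hs : 2 * (E - 11 * τ / 4) ≤ s) : dxy ≤ δ := by
  have hs0 : 0 ≤ s := le_trans (by linarith) hs
  have h4 : (2 * (E - 11 * τ / 4)) * (2 * (E - 11 * τ / 4)) ≤ s * s :=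
    mul_le_mul hs hs (by linarith) hs0
  have h7 : dxy * dxy ≤ 22 * E * τ := by nlinarith [sq_nonneg τ]
  have h8 : 22 * E * τ ≤ 22 * D * τ := by nlinarith [mul_le_mul_of_nonneg_right hED hτ.le]
  have h9 : dxy * dxy ≤ 11 / 12 * δ ^ 2 := by nlinarith
  nlinarith

def sat (L : List (EuclideanSpace ℝ (Fin n) × ℝ)) : Set (EuclideanSpace ℝ (Fin n)) :=
  {x | ∀ p ∈ L, 0 ≤ ⟪p.1, x⟫ + p.2}

lemma sat_nil : sat ([] : List (EuclideanSpace ℝ (Fin n) × ℝ)) = univ := by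
  ext x; simp [sat]

lemma sat_append (L₁ L₂ : List (EuclideanSpace ℝ (Fin n) × ℝ)) :
    sat (L₁ ++ L₂) = sat L₁ ∩ sat L₂ := by
  ext x; simp [sat, or_imp, forall_and]

lemma round_lemma (δ D τ E : ℝ) (S : Set (EuclideanSpace ℝ (Fin n)))
    (hδ : 0 < δ) (hDpos : 0 < D) (hτ : 0 < τ) (hτD : 24 * D * τ ≤ δ ^ 2)
    (hτs : 24 * τ ≤ D) (hE : D / 2 ≤ E) (hED : E ≤ D)
    (hbd : IsBounded S) (hdiam : Metric.diam S ≤ E) :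
    ∃ L : List (EuclideanSpace ℝ (Fin n) × ℝ),
      (∀ p ∈ L, Metric.diam (S ∩ {x | ⟪p.1, x⟫ + p.2 < 0}) ≤ δ) ∧
      Metric.diam (S ∩ sat L) ≤ E - τ / 2 := by
  classical
  have hEpos : 0 < E := by linarith
  have hEτ : 0 ≤ E - τ / 2 := by linarith
  rcases S.eq_empty_or_nonempty with rfl | hne
  · exact ⟨[], by simp, by simp [hEτ]⟩
  obtain ⟨r₀, hr₀⟩ := hbd.subset_closedBall 0
  set r : ℝ := max r₀ 0 with hrdef
  have hrS : ∀ x ∈ S, ‖x‖ ≤ r := by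
    intro x hx
    have := hr₀ hx
    rw [mem_closedBall, dist_zero_right] at this
    exact this.trans (le_max_left _ _)
  set ε : ℝ := τ / (4 * E) with hεdef
  have hεpos : 0 < ε := by positivity
  have hεE : ε * E = τ / 4 := by rw [hεdef]; field_simp
  -- finite net of the unit sphere
  obtain ⟨t, htsub, htfin, htcov⟩ :=
    (isCompact_sphere (0 : EuclideanSpace ℝ (Fin n)) 1).totallyBounded.exists_subset
      (dist_mem_uniformity hεpos)
  -- infimum of the linear functional over S
  set Q : EuclideanSpace ℝ (Fin n) → ℝ := fun u => sInf ((fun x => ⟪u, x⟫) '' S) with hQdef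
  have hlow : ∀ u : EuclideanSpace ℝ (Fin n), ‖u‖ = 1 → ∀ x ∈ S, -r ≤ ⟪u, x⟫ := by
    intro u hu x hx
    have h1 := abs_real_inner_le_norm u x
    rw [hu, one_mul] at h1
    have h2 := hrS x hx
    have := abs_le.1 (h1.trans h2)
    linarith [this.1]
  have hbdd : ∀ u : EuclideanSpace ℝ (Fin n), ‖u‖ = 1 →
      BddBelow ((fun x => ⟪u, x⟫) '' S) := by
    rintro u hu
    exact ⟨-r, by rintro b ⟨x, hx, rfl⟩; exact hlow u hu x hx⟩
  have hQle : ∀ u : EuclideanSpace ℝ (Fin n), ‖u‖ = 1 → ∀ x ∈ S, Q u ≤ ⟪u, x⟫ := by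
    intro u hu x hx
    exact csInf_le (hbdd u hu) ⟨x, hx, rfl⟩
  have hQge : ∀ u : EuclideanSpace ℝ (Fin n), ‖u‖ = 1 → ∀ q ∈ S, ⟪u, q⟫ - E ≤ Q u := by
    intro u hu q hq
    refine le_csInf (hne.image _) ?_
    rintro b ⟨x, hx, rfl⟩
    have h1 : ⟪u, q - x⟫ ≤ ‖q - x‖ := by
      have := real_inner_le_norm u (q - x)
      rwa [hu, one_mul] at this
    have h2 : ‖q - x‖ ≤ E := by
      rw [← dist_eq_norm]
      exact (dist_le_diam_of_mem hbd hq hx).trans hdiam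
    have h3 : ⟪u, q - x⟫ = ⟪u, q⟫ - ⟪u, x⟫ := inner_sub_right u q x
    linarith
  -- the cut for a given direction
  set cut : EuclideanSpace ℝ (Fin n) → EuclideanSpace ℝ (Fin n) × ℝ := fun u =>
    if Metric.diam (S ∩ {x | ⟪u, x⟫ < Q u + 2 * τ}) ≤ δ then (u, -(Q u + 2 * τ))
    else (u, r + 1) with hcutdef
  refine ⟨htfin.toFinset.toList.map cut, ?_, ?_⟩
  · -- each removed piece is small
    intro p hp
    rw [List.mem_map] at hp
    obtain ⟨u, hu, rfl⟩ := hp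
    have hu1 : ‖u‖ = 1 := by
      have : u ∈ t := by simpa using hu
      exact mem_sphere_zero_iff_norm.mp (htsub this)
    by_cases hcap : Metric.diam (S ∩ {x | ⟪u, x⟫ < Q u + 2 * τ}) ≤ δ
    · rw [hcutdef]; simp only [if_pos hcap]
      have : {x : EuclideanSpace ℝ (Fin n) | ⟪u, x⟫ + -(Q u + 2 * τ) < 0} =
          {x | ⟪u, x⟫ < Q u + 2 * τ} := by
        ext x; simp only [mem_setOf_eq]; constructor <;> intro h <;> linarith
      rw [this]; exact hcap
    · rw [hcutdef]; simp only [if_neg hcap]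
      have : S ∩ {x : EuclideanSpace ℝ (Fin n) | ⟪u, x⟫ + (r + 1) < 0} = ∅ := by
        ext x
        simp only [mem_inter_iff, mem_setOf_eq, mem_empty_iff_false, iff_false, not_and]
        intro hx h
        have := hlow u hu1 x hx
        linarith
      rw [this]
      simpa using hδ.le
  · -- remaining set has smaller diameter
    apply diam_le_of_forall_dist_le hEτ
    rintro a ⟨haS, haSat⟩ b ⟨hbS, hbSat⟩
    by_contra hcon
    push_neg at hcon
    set d : ℝ := dist a b with hddef
    have hd0 : 0 < d := by linarith [hτ, hE, hτs]
    have hdE : d ≤ E := (dist_le_diam_of_mem hbd haS hbS).trans hdiam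
    set u : EuclideanSpace ℝ (Fin n) := d⁻¹ • (b - a) with hudef
    have hba : ‖b - a‖ = d := by rw [← dist_eq_norm, dist_comm, ← hddef]
    have hu1 : ‖u‖ = 1 := by
      rw [hudef, norm_smul, hba, norm_inv, Real.norm_eq_abs, abs_of_pos hd0,
        inv_mul_cancel₀ hd0.ne']
    obtain ⟨u', hu't, hu'near⟩ : ∃ u' ∈ t, dist u u' < ε := by
      have hmem : u ∈ sphere (0 : EuclideanSpace ℝ (Fin n)) 1 :=
        mem_sphere_zero_iff_norm.mpr hu1
      have := htcov hmem
      simpa using this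
    have hu'1 : ‖u'‖ = 1 := mem_sphere_zero_iff_norm.mp (htsub hu't)
    -- ⟪u', b - a⟫ ≥ d - τ/4
    have hiq : ⟪u, b - a⟫ = d := by
      rw [hudef, real_inner_smul_left, real_inner_self_eq_norm_sq, hba]
      field_simp
    have hnear : |⟪u' - u, b - a⟫| ≤ ε * d := by
      refine (abs_real_inner_le_norm _ _).trans ?_
      have h1 : ‖u' - u‖ ≤ ε := by
        rw [← dist_eq_norm, dist_comm]
        exact hu'near.le
      calc ‖u' - u‖ * ‖b - a‖ ≤ ε * ‖b - a‖ := by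
            exact mul_le_mul_of_nonneg_right h1 (norm_nonneg _)
        _ = ε * d := by rw [hba]
    have h1 : d - τ / 4 ≤ ⟪u', b - a⟫ := by
      have hsplit : ⟪u' - u, b - a⟫ = ⟪u', b - a⟫ - ⟪u, b - a⟫ := inner_sub_left u' u (b - a)
      have h2 : ε * d ≤ ε * E := mul_le_mul_of_nonneg_left hdE hεpos.le
      have h3 := abs_le.1 hnear
      rw [hsplit, hiq] at h3
      linarith [h3.1, hεE]
    have hinnersplit : ⟪u', b - a⟫ = ⟪u', b⟫ - ⟪u', a⟫ := inner_sub_right u' b a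
    -- a is low in direction u'
    have hbup : ⟪u', b⟫ ≤ Q u' + E := by linarith [hQge u' hu'1 b hbS]
    have haQ : ⟪u', a⟫ ≤ Q u' + 3 * τ / 4 := by linarith
    -- the cap in direction u' is admissible
    have hcap : Metric.diam (S ∩ {x | ⟪u', x⟫ < Q u' + 2 * τ}) ≤ δ := by
      apply diam_le_of_forall_dist_le hδ.le
      rintro x ⟨hxS, hx⟩ y ⟨hyS, hy⟩
      rw [mem_setOf_eq] at hx hy
      have hbx : ‖b - x‖ ≤ E := by
        rw [← dist_eq_norm]; exact (dist_le_diam_of_mem hbd hbS hxS).trans hdiam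
      have hby : ‖b - y‖ ≤ E := by
        rw [← dist_eq_norm]; exact (dist_le_diam_of_mem hbd hbS hyS).trans hdiam
      have par := parallelogram_law_with_norm ℝ (b - x) (b - y)
      have hbQ : Q u' + (d - τ / 4) ≤ ⟪u', b⟫ := by linarith [hQle u' hu'1 a haS]
      have hexp : ⟪u', (b - x) + (b - y)⟫ = 2 * ⟪u', b⟫ - ⟪u', x⟫ - ⟪u', y⟫ := by
        rw [inner_add_right, inner_sub_right, inner_sub_right]; ring
      have hE11 : 0 ≤ E - 11 * τ / 4 := by linarith
      have hsum : 2 * (E - 11 * τ / 4) ≤ ‖(b - x) + (b - y)‖ := by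
        have hle : ⟪u', (b - x) + (b - y)⟫ ≤ ‖(b - x) + (b - y)‖ := by
          have := real_inner_le_norm u' ((b - x) + (b - y))
          rwa [hu'1, one_mul] at this
        rw [hexp] at hle
        linarith
      have hdeq : ‖(b - x) - (b - y)‖ = dist x y := by
        rw [show (b - x) - (b - y) = y - x by abel, ← dist_eq_norm, dist_comm]
      rw [hdeq] at par
      have h5 : ‖b - x‖ * ‖b - x‖ ≤ E * E := mul_le_mul hbx hbx (norm_nonneg _) hEpos.le
      have h6 : ‖b - y‖ * ‖b - y‖ ≤ E * E := mul_le_mul hby hby (norm_nonneg _) hEpos.le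
      exact cap_arith δ D τ E (dist x y) (‖(b - x) + (b - y)‖) hδ hτ hτD hED hEpos hE11
        dist_nonneg (by linarith) hsum
    -- contradiction: a was removed by the cut in direction u'
    have hmem : cut u' ∈ htfin.toFinset.toList.map cut := by
      refine List.mem_map_of_mem ?_
      simp only [Finset.mem_toList, Set.Finite.mem_toFinset]
      exact hu't
    have hsat := haSat _ hmem
    rw [hcutdef] at hsat
    simp only [if_pos hcap] at hsat
    -- hsat : 0 ≤ ⟪u', a⟫ + -(Q u' + 2 * τ)
    linarith [hsat]

lemma mem_sat_take (L : List (EuclideanSpace ℝ (Fin n) × ℝ)) (i : ℕ)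
    (x : EuclideanSpace ℝ (Fin n)) :
    x ∈ sat (L.take i) ↔
      ∀ (j : ℕ) (h : j < L.length), j < i → 0 ≤ ⟪(L[j]'h).1, x⟫ + (L[j]'h).2 := by
  constructor
  · intro hx j hj hji
    refine hx _ (List.mem_iff_getElem.2 ⟨j, ?_, ?_⟩)
    · simp [List.length_take]; omega
    · simp [List.getElem_take]
  · intro hx p hp
    obtain ⟨j, hj, rfl⟩ := List.mem_iff_getElem.1 hp
    have hj' : j < L.length := by
      have := hj; simp [List.length_take] at this; omega
    have hji : j < i := by
      have := hj; simp [List.length_take] at this; omega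
    have := hx j hj' hji
    simpa [List.getElem_take] using this

lemma main_lemma (δ D τ : ℝ) (hδ : 0 < δ) (hDpos : 0 < D) (hτ : 0 < τ)
    (hτD : 24 * D * τ ≤ δ ^ 2) (hτs : 24 * τ ≤ D) :
    ∀ (m : ℕ) (S : Set (EuclideanSpace ℝ (Fin n))) (E : ℝ), IsBounded S →
      Metric.diam S ≤ E → E ≤ D → D / 2 ≤ E - m * (τ / 2) →
      ∃ L : List (EuclideanSpace ℝ (Fin n) × ℝ),
        (∀ (i : ℕ) (h : i < L.length),
          Metric.diam (S ∩ sat (L.take i) ∩ {x | ⟪(L[i]'h).1, x⟫ + (L[i]'h).2 < 0}) ≤ δ) ∧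
        Metric.diam (S ∩ sat L) ≤ E - m * (τ / 2) := by
  intro m
  induction m with
  | zero =>
    intro S E hbd hdiam hED hm
    exact ⟨[], by simp, by simpa [sat_nil] using hdiam⟩
  | succ m ih =>
    intro S E hbd hdiam hED hm
    push_cast at hm
    have hE : D / 2 ≤ E := by
      have h1 : (0:ℝ) ≤ (m + 1) * (τ / 2) := by positivity
      linarith
    obtain ⟨L₀, hL₀p, hL₀d⟩ :=
      round_lemma δ D τ E S hδ hDpos hτ hτD hτs hE hED hbd hdiam
    obtain ⟨L₁, hL₁p, hL₁d⟩ :=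
      ih (S ∩ sat L₀) (E - τ / 2) (hbd.subset inter_subset_left) hL₀d
        (by linarith) (by push_cast; linarith)
    refine ⟨L₀ ++ L₁, ?_, ?_⟩
    · intro i h
      rcases lt_or_ge i L₀.length with hi | hi
      · have hget : (L₀ ++ L₁)[i]'h = L₀[i]'hi := List.getElem_append_left hi
        rw [hget]
        have hsub : S ∩ sat ((L₀ ++ L₁).take i) ∩
            {x | ⟪(L₀[i]'hi).1, x⟫ + (L₀[i]'hi).2 < 0} ⊆
            S ∩ {x | ⟪(L₀[i]'hi).1, x⟫ + (L₀[i]'hi).2 < 0} := by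
          rintro x ⟨⟨h1, _⟩, h3⟩; exact ⟨h1, h3⟩
        refine le_trans (diam_mono hsub (hbd.subset inter_subset_left)) ?_
        exact hL₀p _ (List.getElem_mem hi)
      · have hlen : i < L₀.length + L₁.length := by
          simpa [List.length_append] using h
        have hi' : i - L₀.length < L₁.length := by omega
        have hget : (L₀ ++ L₁)[i]'h = L₁[i - L₀.length]'hi' :=
          List.getElem_append_right hi
        have htake : (L₀ ++ L₁).take i = L₀ ++ L₁.take (i - L₀.length) := by
          rw [List.take_append, List.take_of_length_le hi]
        rw [hget, htake, sat_append, ← inter_assoc]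
        exact hL₁p _ hi'
    · rw [sat_append, ← inter_assoc]
      refine hL₁d.trans ?_
      push_cast; linarith

end Stmt2Aux

open Stmt2Aux in
/-- A bounded set `R₀ ⊆ ℝⁿ` of diameter at most `D > δ` can be shaved by
finitely many half-space cuts `{x : cⱼᵀx + dⱼ ≥ 0}`, each removed piece `R_{i-1} \ R_i`
having diameter at most `δ`, so that the remaining set `R_k` has diameter at most
`max (D − δ²/(4D)) 0`. -/
theorem stmt2 (n : ℕ) (δ D : ℝ) (hδ : 0 < δ) (hD : δ < D)
    (R₀ : Set (EuclideanSpace ℝ (Fin n))) (hbd : Bornology.IsBounded R₀)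
    (hdiam : Metric.diam R₀ ≤ D) :
    ∃ (k : ℕ) (c : Fin k → EuclideanSpace ℝ (Fin n)) (d : Fin k → ℝ),
      (∀ i : ℕ, i < k →
        Metric.diam
          ((R₀ ∩ {x | ∀ j : Fin k, (j : ℕ) < i → 0 ≤ ⟪c j, x⟫ + d j}) \
           (R₀ ∩ {x | ∀ j : Fin k, (j : ℕ) < i + 1 → 0 ≤ ⟪c j, x⟫ + d j})) ≤ δ) ∧
      Metric.diam (R₀ ∩ {x | ∀ j : Fin k, 0 ≤ ⟪c j, x⟫ + d j}) ≤ max (D - δ ^ 2 / (4 * D)) 0 := by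
  have hDpos : 0 < D := hδ.trans hD
  set τ : ℝ := δ ^ 2 / (24 * D) with hτdef
  have hτ : 0 < τ := by positivity
  have hτD : 24 * D * τ ≤ δ ^ 2 := by
    rw [hτdef, mul_div_cancel₀ _ (by positivity : (24:ℝ) * D ≠ 0)]
  have hτs : 24 * τ ≤ D := by
    rw [hτdef]
    rw [← mul_div_assoc, div_le_iff₀ (by positivity : (0:ℝ) < 24 * D)]
    nlinarith
  obtain ⟨L, hP, hdm⟩ := main_lemma δ D τ hδ hDpos hτ hτD hτs 12 R₀ D hbd hdiam le_rfl
    (by push_cast; nlinarith)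
  refine ⟨L.length, fun j => (L.get j).1, fun j => (L.get j).2, ?_, ?_⟩
  · intro i hik
    have hsub : (R₀ ∩ {x | ∀ j : Fin L.length, (j : ℕ) < i → 0 ≤ ⟪(L.get j).1, x⟫ + (L.get j).2}) \
        (R₀ ∩ {x | ∀ j : Fin L.length, (j : ℕ) < i + 1 → 0 ≤ ⟪(L.get j).1, x⟫ + (L.get j).2}) ⊆
        R₀ ∩ sat (L.take i) ∩ {x | ⟪(L[i]'hik).1, x⟫ + (L[i]'hik).2 < 0} := by
      rintro x ⟨⟨hx0, hxall⟩, hxnot⟩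
      refine ⟨⟨hx0, ?_⟩, ?_⟩
      · rw [mem_sat_take]
        intro j hj hji
        exact hxall ⟨j, hj⟩ hji
      · by_contra hge
        simp only [mem_setOf_eq, not_lt] at hge
        refine hxnot ⟨hx0, fun j hji => ?_⟩
        rcases lt_or_ge (j : ℕ) i with h' | h'
        · exact hxall j h'
        · have hji' : (j : ℕ) = i := by omega
          have : j = ⟨i, hik⟩ := Fin.ext hji'
          rw [this]
          simpa [List.get_eq_getElem] using hge
    refine le_trans (diam_mono hsub (hbd.subset ?_)) (hP i hik)
    rintro x ⟨⟨h1, _⟩, _⟩; exact h1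
  · have hseteq : {x | ∀ j : Fin L.length, 0 ≤ ⟪(L.get j).1, x⟫ + (L.get j).2} = sat L := by
      ext x
      simp only [sat, mem_setOf_eq, List.mem_iff_getElem]
      constructor
      · rintro h p ⟨j, hj, rfl⟩
        simpa [List.get_eq_getElem] using h ⟨j, hj⟩
      · intro h j
        exact h _ ⟨j, j.isLt, by simp [List.get_eq_getElem]⟩
    rw [hseteq]
    refine le_trans (hdm.trans (le_of_eq ?_)) (le_max_left _ _)
    rw [hτdef]; ring
end

section
/- Let K₀ = [0,1]ⁿ. For any δ > 0, there exist m ∈ ℕ and pairs (a₁,b₁),…,(a_m,b_m) ∈ ℝⁿ × ℝ such that, setting K_i = K₀ ∩ ⋂_{j=1}^{i} {x : a_jᵀx + b_j ≥ 0}, one has diam(K_{i-1} \ K_i) ≤ δ for all i ∈ [m], and K_m = ∅. -/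
open scoped RealInnerProductSpace
open Metric Set

lemma aux_dist_le {n : ℕ} (x y : EuclideanSpace ℝ (Fin n)) (C : ℝ) (hC : 0 ≤ C)
    (h : ∀ l, dist (x l) (y l) ≤ C) : dist x y ≤ Real.sqrt n * C := by
  rw [EuclideanSpace.dist_eq]
  have h1 : (∑ l, dist (x l) (y l) ^ 2) ≤ ∑ _l : Fin n, C ^ 2 :=
    Finset.sum_le_sum fun l _ => pow_le_pow_left₀ dist_nonneg (h l) 2
  have h2 : (∑ _l : Fin n, C ^ 2) = (n : ℝ) * C ^ 2 := by
    simp [Finset.sum_const, Finset.card_univ, mul_comm]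
  calc Real.sqrt (∑ l, dist (x l) (y l) ^ 2) ≤ Real.sqrt ((n : ℝ) * C ^ 2) := by
        apply Real.sqrt_le_sqrt; rw [← h2]; exact h1
    _ = Real.sqrt n * C := by
        rw [Real.sqrt_mul (by positivity), Real.sqrt_sq hC]

lemma aux_net (n : ℕ) (η : ℝ) (hη : 0 < η) :
    ∃ V : Finset (EuclideanSpace ℝ (Fin n)), (∀ v ∈ V, ‖v‖ = 1) ∧
      ∀ u : EuclideanSpace ℝ (Fin n), ‖u‖ = 1 → ∃ v ∈ V, ‖u - v‖ < η := by
  have hc : IsCompact (sphere (0 : EuclideanSpace ℝ (Fin n)) 1) := isCompact_sphere _ _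
  have hcover : sphere (0 : EuclideanSpace ℝ (Fin n)) 1 ⊆
      ⋃ v ∈ sphere (0 : EuclideanSpace ℝ (Fin n)) 1, ball v η := by
    intro u hu
    exact mem_biUnion hu (mem_ball_self hη)
  obtain ⟨b', hb'sub, hb'fin, hb'cov⟩ := hc.elim_finite_subcover_image
    (fun v _ => isOpen_ball) hcover
  refine ⟨hb'fin.toFinset, ?_, ?_⟩
  · intro v hv
    have := hb'sub (hb'fin.mem_toFinset.mp hv)
    simpa [mem_sphere_iff_norm] using this
  · intro u hu
    have hu' : u ∈ sphere (0 : EuclideanSpace ℝ (Fin n)) 1 := by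
      simpa [mem_sphere_iff_norm] using hu
    obtain ⟨v, hv, huv⟩ := mem_iUnion₂.mp (hb'cov hu')
    refine ⟨v, hb'fin.mem_toFinset.mpr hv, ?_⟩
    rwa [mem_ball, dist_eq_norm] at huv

lemma aux_ball {n N : ℕ} {γ r : ℝ} (w : ℕ → EuclideanSpace ℝ (Fin n)) (hγ : 0 < γ)
    (hcov : ∀ u : EuclideanSpace ℝ (Fin n), ‖u‖ = 1 → ∃ k, k < N ∧ γ ≤ ⟪u, w k⟫)
    (y : EuclideanSpace ℝ (Fin n)) (hy : ∀ k, k < N → ⟪w k, y⟫ ≤ r) (hr : 0 ≤ r) :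
    ‖y‖ ≤ r / γ := by
  rcases eq_or_ne y 0 with h0 | h0
  · simp [h0]; positivity
  · have hny : 0 < ‖y‖ := norm_pos_iff.mpr h0
    obtain ⟨k, hkN, hk⟩ := hcov (‖y‖⁻¹ • y) (by
      rw [norm_smul, norm_inv, norm_norm, inv_mul_cancel₀ hny.ne'])
    rw [real_inner_smul_left] at hk
    have h1 : γ * ‖y‖ ≤ ⟪w k, y⟫ := by
      have h2 := mul_le_mul_of_nonneg_left hk hny.le
      calc γ * ‖y‖ = ‖y‖ * γ := mul_comm _ _
        _ ≤ ‖y‖ * (‖y‖⁻¹ * ⟪y, w k⟫) := h2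
        _ = ⟪y, w k⟫ := by field_simp
        _ = ⟪w k, y⟫ := real_inner_comm _ _
    have h3 := hy k hkN
    rw [le_div_iff₀ hγ]
    nlinarith

lemma aux_cap {n : ℕ} (v y z : EuclideanSpace ℝ (Fin n)) (ρ r : ℝ) (hv : ‖v‖ = 1)
    (hy : ‖y‖ ≤ ρ) (hz : ‖z‖ ≤ ρ) (hry : r ≤ ⟪v, y⟫) (hrz : r ≤ ⟪v, z⟫) (hr : 0 ≤ r) :
    ‖y - z‖ ^ 2 ≤ 4 * (ρ ^ 2 - r ^ 2) := by
  have hvv : ⟪v, v⟫ = 1 := by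
    rw [real_inner_self_eq_norm_sq, hv]; norm_num
  have hpq : ⟪y - ⟪v, y⟫ • v, z - ⟪v, z⟫ • v⟫ = ⟪y, z⟫ - ⟪v, y⟫ * ⟪v, z⟫ := by
    simp only [inner_sub_left, inner_sub_right, real_inner_smul_left,
      real_inner_smul_right, hvv]
    rw [real_inner_comm y v, real_inner_comm z v]
    ring
  have hpp : ‖y - ⟪v, y⟫ • v‖ ^ 2 = ‖y‖ ^ 2 - ⟪v, y⟫ ^ 2 := by
    rw [← real_inner_self_eq_norm_sq, ← real_inner_self_eq_norm_sq]
    simp only [inner_sub_left, inner_sub_right, real_inner_smul_left,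
      real_inner_smul_right, hvv]
    rw [real_inner_comm y v]
    ring
  have hqq : ‖z - ⟪v, z⟫ • v‖ ^ 2 = ‖z‖ ^ 2 - ⟪v, z⟫ ^ 2 := by
    rw [← real_inner_self_eq_norm_sq, ← real_inner_self_eq_norm_sq]
    simp only [inner_sub_left, inner_sub_right, real_inner_smul_left,
      real_inner_smul_right, hvv]
    rw [real_inner_comm z v]
    ring
  have hαy : ⟪v, y⟫ ≤ ‖y‖ := by
    calc ⟪v, y⟫ ≤ ‖v‖ * ‖y‖ := real_inner_le_norm v y
      _ = ‖y‖ := by rw [hv, one_mul]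
  have hβz : ⟪v, z⟫ ≤ ‖z‖ := by
    calc ⟪v, z⟫ ≤ ‖v‖ * ‖z‖ := real_inner_le_norm v z
      _ = ‖z‖ := by rw [hv, one_mul]
  have hA : (0:ℝ) ≤ ρ ^ 2 - r ^ 2 := by nlinarith [norm_nonneg y]
  have hpbound : ‖y - ⟪v, y⟫ • v‖ ^ 2 ≤ ρ ^ 2 - r ^ 2 := by
    rw [hpp]; nlinarith [norm_nonneg y]
  have hqbound : ‖z - ⟪v, z⟫ • v‖ ^ 2 ≤ ρ ^ 2 - r ^ 2 := by
    rw [hqq]; nlinarith [norm_nonneg z]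
  have hcs : |⟪y - ⟪v, y⟫ • v, z - ⟪v, z⟫ • v⟫| ≤ ‖y - ⟪v, y⟫ • v‖ * ‖z - ⟪v, z⟫ • v‖ :=
    abs_real_inner_le_norm _ _
  have hprod : ‖y - ⟪v, y⟫ • v‖ * ‖z - ⟪v, z⟫ • v‖ ≤ ρ ^ 2 - r ^ 2 := by
    nlinarith [norm_nonneg (y - ⟪v, y⟫ • v), norm_nonneg (z - ⟪v, z⟫ • v)]
  have hsub : ‖y - z‖ ^ 2 = ‖y‖ ^ 2 - 2 * ⟪y, z⟫ + ‖z‖ ^ 2 := norm_sub_sq_real y z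
  have habs := (abs_le.mp hcs).1
  nlinarith [hpq, hsub, habs]

set_option maxHeartbeats 2000000 in
/-- For any `δ > 0`, the unit cube `K₀ = [0,1]ⁿ` can be exhausted by
finitely many half-space cuts: setting `K_i = K₀ ∩ ⋂_{j ≤ i} {x : aⱼᵀx + bⱼ ≥ 0}`, each
difference `K_{i-1} \ K_i` has diameter at most `δ` and `K_m = ∅`. -/
theorem stmt3 (n : ℕ) (δ : ℝ) (hδ : 0 < δ) :
    ∃ (m : ℕ) (a : Fin m → EuclideanSpace ℝ (Fin n)) (b : Fin m → ℝ),
      (∀ i : ℕ, i < m →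
        Metric.diam
          (({x : EuclideanSpace ℝ (Fin n) | (∀ l, x l ∈ Set.Icc (0:ℝ) 1) ∧
              ∀ j : Fin m, (j : ℕ) < i → 0 ≤ ⟪a j, x⟫ + b j}) \
           ({x : EuclideanSpace ℝ (Fin n) | (∀ l, x l ∈ Set.Icc (0:ℝ) 1) ∧
              ∀ j : Fin m, (j : ℕ) < i + 1 → 0 ≤ ⟪a j, x⟫ + b j})) ≤ δ) ∧
      ({x : EuclideanSpace ℝ (Fin n) | (∀ l, x l ∈ Set.Icc (0:ℝ) 1) ∧
          ∀ j : Fin m, 0 ≤ ⟪a j, x⟫ + b j} = ∅) := by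
  classical
  by_cases hsmall : Real.sqrt n ≤ δ
  · -- trivial case : one cut removes everything, the unique piece is the whole cube
    refine ⟨1, fun _ => 0, fun _ => -1, ?_, ?_⟩
    · intro i _
      apply Metric.diam_le_of_forall_dist_le hδ.le
      intro x hx y hy
      simp only [Set.mem_diff, Set.mem_setOf_eq] at hx hy
      calc dist x y ≤ Real.sqrt n * 1 := by
            apply aux_dist_le x y 1 zero_le_one
            intro l
            have h1 := hx.1.1 l
            have h2 := hy.1.1 l
            rw [Set.mem_Icc] at h1 h2
            rw [Real.dist_eq, abs_le]
            constructor <;> linarith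
        _ = Real.sqrt n := mul_one _
        _ ≤ δ := hsmall
    · rw [Set.eq_empty_iff_forall_notMem]
      intro x hx
      simp only [Set.mem_setOf_eq] at hx
      have := hx.2 ⟨0, one_pos⟩
      rw [inner_zero_left] at this
      linarith
  · push_neg at hsmall
    have hn1 : 1 ≤ n := by
      by_contra h
      push_neg at h
      interval_cases n
      · simp [Real.sqrt_zero] at hsmall; linarith
    set R := Real.sqrt n / 2 with hRdef
    have hR : 0 < R := by
      have : (0:ℝ) < Real.sqrt n := Real.sqrt_pos.mpr (by exact_mod_cast hn1)
      positivity
    have hδR : δ ≤ 2 * R := by rw [hRdef]; linarith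
    set d := min (δ^2/(4*(2*R+1))) 1 with hddef
    have hd : 0 < d := lt_min (by positivity) one_pos
    have hd1 : d ≤ 1 := min_le_right _ _
    have hdδ : 4 * d * (2*R+1) ≤ δ^2 := by
      have h1 : d ≤ δ^2/(4*(2*R+1)) := min_le_left _ _
      have h2 : (0:ℝ) < 4*(2*R+1) := by positivity
      rw [le_div_iff₀ h2] at h1
      nlinarith
    set ε := min (d/(4*R)) (1/2 : ℝ) with hεdef
    have hε : 0 < ε := lt_min (by positivity) (by norm_num)
    have hε2 : ε ≤ 1/2 := min_le_right _ _
    have hεR : ε * (4*R) ≤ d := by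
      have h1 : ε ≤ d/(4*R) := min_le_left _ _
      rw [le_div_iff₀ (by positivity)] at h1
      exact h1
    set γ := 1 - ε with hγdef
    have hγhalf : (1/2:ℝ) ≤ γ := by rw [hγdef]; linarith
    have hγ0 : 0 < γ := by linarith
    have hdivle : ∀ h' : ℝ, 0 ≤ h' → h' ≤ R → h'/γ ≤ h' + d/2 := by
      intro h' h0 hhR
      rw [div_le_iff₀ hγ0, hγdef]
      have h3 : ε * h' ≤ d/4 := by nlinarith
      nlinarith
    have hhalfγ : ∀ h' : ℝ, 0 ≤ h' → h'/γ ≤ 2*h' := by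
      intro h' h0
      rw [div_le_iff₀ hγ0]
      nlinarith
    -- the net
    obtain ⟨V, hVunit, hVcov⟩ := aux_net n (Real.sqrt (2*ε)) (Real.sqrt_pos.mpr (by positivity))
    have hVcov' : ∀ u : EuclideanSpace ℝ (Fin n), ‖u‖ = 1 → ∃ v ∈ V, γ ≤ ⟪u, v⟫ := by
      intro u hu
      obtain ⟨v, hvV, hvu⟩ := hVcov u hu
      refine ⟨v, hvV, ?_⟩
      have h1 : ‖u - v‖^2 ≤ 2*ε := by
        have h2 : ‖u - v‖^2 ≤ (Real.sqrt (2*ε))^2 :=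
          pow_le_pow_left₀ (norm_nonneg _) hvu.le 2
        rwa [Real.sq_sqrt (by positivity)] at h2
      have hexp : ‖u - v‖^2 = 2 - 2*⟪u,v⟫ := by
        rw [norm_sub_sq_real, hu, hVunit v hvV]; ring
      rw [hγdef]; linarith
    have hex : ∃ u : EuclideanSpace ℝ (Fin n), ‖u‖ = 1 :=
      ⟨EuclideanSpace.single ⟨0, hn1⟩ (1:ℝ), by simp [EuclideanSpace.norm_single]⟩
    obtain ⟨u₀, hu₀⟩ := hex
    obtain ⟨v₀, hv₀V, -⟩ := hVcov' u₀ hu₀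
    set L := V.toList with hLdef
    set N := L.length with hNdef
    have hv₀L : v₀ ∈ L := by rw [hLdef]; exact Finset.mem_toList.mpr hv₀V
    have hN : 0 < N := List.length_pos_iff.mpr (List.ne_nil_of_mem hv₀L)
    set w : ℕ → EuclideanSpace ℝ (Fin n) := fun k => L.getD k v₀ with hwdef
    have hwV : ∀ k, w k ∈ V := by
      intro k
      by_cases hk : k < N
      · rw [hwdef]
        simp only
        rw [List.getD_eq_getElem L v₀ hk]
        exact Finset.mem_toList.mp (List.getElem_mem _)
      · rw [hwdef]
        simp only
        rw [List.getD_eq_default L v₀ (le_of_not_gt hk)]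
        exact hv₀V
    have hwunit : ∀ k, ‖w k‖ = 1 := fun k => hVunit _ (hwV k)
    have hwcov : ∀ u : EuclideanSpace ℝ (Fin n), ‖u‖ = 1 → ∃ k, k < N ∧ γ ≤ ⟪u, w k⟫ := by
      intro u hu
      obtain ⟨v, hvV, hγv⟩ := hVcov' u hu
      have hvL : v ∈ L := Finset.mem_toList.mpr hvV
      obtain ⟨k, hkl, hk⟩ := List.mem_iff_getElem.mp hvL
      refine ⟨k, hkl, ?_⟩
      have : w k = v := by
        rw [hwdef]; simp only
        rw [List.getD_eq_getElem L v₀ hkl]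
        exact hk
      rw [this]; exact hγv
    -- levels
    set hlev : ℕ → ℝ := fun t => max (R - t*(d/2)) (δ/16) with hlevdef
    have hδ16R : δ/16 ≤ R := by linarith
    have hlev_pos : ∀ t, 0 < hlev t := fun t =>
      lt_of_lt_of_le (by positivity) (le_max_right _ _)
    have hlev_le : ∀ t, hlev t ≤ R := by
      intro t
      apply max_le _ hδ16R
      have : (0:ℝ) ≤ (t:ℝ)*(d/2) := by positivity
      linarith
    have hlev0 : hlev 0 = R := by
      rw [hlevdef]; simp only [Nat.cast_zero, zero_mul, sub_zero]
      exact max_eq_left hδ16R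
    have hlev_step : ∀ t : ℕ, hlev t - d/2 ≤ hlev (t+1) := by
      intro t
      rw [sub_le_iff_le_add]
      apply max_le
      · have he : R - (t:ℝ)*(d/2) = (R - ((t:ℝ)+1)*(d/2)) + d/2 := by ring
        rw [he]
        apply add_le_add_left
        apply le_max_of_le_left
        apply le_of_eq
        push_cast
        ring
      · have := le_max_right (R - ((t+1:ℕ):ℝ)*(d/2)) (δ/16)
        linarith
    set T := Nat.ceil (2*R/d) with hTdef
    have hlevT : hlev T = δ/16 := by
      apply max_eq_right
      have h1 : 2*R/d ≤ (T:ℝ) := Nat.le_ceil _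
      rw [div_le_iff₀ hd] at h1
      nlinarith
    set m := (T+1)*N + 1 with hmdef
    set c : EuclideanSpace ℝ (Fin n) := WithLp.toLp 2 (fun _ => (1:ℝ)/2) with hcdef
    have hcube_c : ∀ x : EuclideanSpace ℝ (Fin n), (∀ l, x l ∈ Set.Icc (0:ℝ) 1) →
        ‖x - c‖ ≤ R := by
      intro x hx
      rw [← dist_eq_norm]
      calc dist x c ≤ Real.sqrt n * (1/2) := by
            apply aux_dist_le x c (1/2) (by norm_num)
            intro l
            have h1 := hx l
            rw [Set.mem_Icc] at h1
            rw [Real.dist_eq, abs_le]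
            have : c l = 1/2 := rfl
            rw [this]
            constructor <;> linarith
        _ = R := by rw [hRdef]; ring
    set A : Fin m → EuclideanSpace ℝ (Fin n) :=
      fun i => if (i:ℕ) < (T+1)*N then -(w ((i:ℕ) % N)) else 0 with hAdef
    set B : Fin m → ℝ :=
      fun i => if (i:ℕ) < (T+1)*N then ⟪w ((i:ℕ) % N), c⟫ + hlev ((i:ℕ)/N) else -1 with hBdef
    have hcut : ∀ (j : Fin m) (x : EuclideanSpace ℝ (Fin n)), ((j:ℕ) < (T+1)*N) →
        ((0 ≤ ⟪A j, x⟫ + B j) ↔ ⟪w ((j:ℕ) % N), x - c⟫ ≤ hlev ((j:ℕ)/N)) := by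
      intro j x hj
      rw [hAdef, hBdef]
      simp only
      rw [if_pos hj, if_pos hj, inner_neg_left, inner_sub_right]
      constructor <;> intro h <;> linarith
    have hrev : ∀ (t : ℕ) (x : EuclideanSpace ℝ (Fin n)),
        (∀ j : Fin m, (j:ℕ) < (t+1)*N → 0 ≤ ⟪A j, x⟫ + B j) → t ≤ T →
        ‖x - c‖ ≤ hlev t / γ := by
      intro t x hx htT
      apply aux_ball w hγ0 hwcov _ _ (hlev_pos t).le
      intro k hkN
      have hmulN : (t+1)*N ≤ (T+1)*N := Nat.mul_le_mul_right _ (by omega)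
      have hsucc : (t+1)*N = t*N + N := by ring
      have hidx : k + t*N < (t+1)*N := by omega
      have hidxm : k + t*N < m := by omega
      have hj := hx ⟨k + t*N, hidxm⟩ hidx
      rw [hcut _ _ (lt_of_lt_of_le hidx hmulN)] at hj
      have h1 : (k + t*N) % N = k := by
        rw [Nat.add_mul_mod_self_right, Nat.mod_eq_of_lt hkN]
      have h2 : (k + t*N) / N = t := by
        rw [Nat.add_mul_div_right _ _ hN, Nat.div_eq_of_lt hkN]; omega
      rw [show ((⟨k + t*N, hidxm⟩ : Fin m) : ℕ) = k + t*N from rfl, h1, h2] at hj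
      exact hj
    refine ⟨m, A, B, ?_, ?_⟩
    · intro i him
      have hiTN : i ≤ (T+1)*N := by omega
      rcases eq_or_lt_of_le hiTN with hieq | hi
      · -- last piece : everything inside a small ball
        apply Metric.diam_le_of_forall_dist_le hδ.le
        intro x hx y hy
        simp only [Set.mem_diff, Set.mem_setOf_eq] at hx hy
        have hball : ∀ z : EuclideanSpace ℝ (Fin n),
            ((∀ l, z l ∈ Set.Icc (0:ℝ) 1) ∧ ∀ j : Fin m, (j:ℕ) < i → 0 ≤ ⟪A j, z⟫ + B j) →
            ‖z - c‖ ≤ δ/8 := by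
          intro z hz
          have h1 := hrev T z (fun j hj => hz.2 j (by omega)) le_rfl
          rw [hlevT] at h1
          have h2 := hhalfγ (δ/16) (by positivity)
          linarith
        have hbx := hball x hx.1
        have hby := hball y hy.1
        calc dist x y ≤ dist x c + dist c y := dist_triangle x c y
          _ = ‖x - c‖ + ‖y - c‖ := by rw [dist_eq_norm, dist_comm c y, dist_eq_norm]
          _ ≤ δ/8 + δ/8 := add_le_add hbx hby
          _ ≤ δ := by linarith
      · -- a cap piece
        obtain ⟨t, s, hsN, htT, rfl⟩ : ∃ t s, s < N ∧ t ≤ T ∧ i = s + N*t := by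
          refine ⟨i / N, i % N, Nat.mod_lt _ hN, ?_, (Nat.mod_add_div i N).symm⟩
          have := (Nat.div_lt_iff_lt_mul hN).mpr hi
          omega
        apply Metric.diam_le_of_forall_dist_le hδ.le
        intro x hx y hy
        simp only [Set.mem_diff, Set.mem_setOf_eq] at hx hy
        -- the failing cut gives a lower bound on the inner product
        have hfail : ∀ z : EuclideanSpace ℝ (Fin n),
            ((∀ l, z l ∈ Set.Icc (0:ℝ) 1) ∧
              ∀ j : Fin m, (j:ℕ) < s + N*t → 0 ≤ ⟪A j, z⟫ + B j) →
            ¬((∀ l, z l ∈ Set.Icc (0:ℝ) 1) ∧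
              ∀ j : Fin m, (j:ℕ) < s + N*t + 1 → 0 ≤ ⟪A j, z⟫ + B j) →
            hlev t < ⟪w s, z - c⟫ := by
          intro z hz1 hz2
          have h3 : ¬ ∀ j : Fin m, (j:ℕ) < s + N*t + 1 → 0 ≤ ⟪A j, z⟫ + B j :=
            fun h => hz2 ⟨hz1.1, h⟩
          push_neg at h3
          obtain ⟨j, hji, hjlt⟩ := h3
          have hjeq : (j:ℕ) = s + N*t := by
            by_contra hne
            have hlt : (j:ℕ) < s + N*t := by omega
            have := hz1.2 j hlt
            linarith
          have hjTN : (j:ℕ) < (T+1)*N := by omega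
          have hmod : (j:ℕ) % N = s := by
            rw [hjeq, Nat.add_mul_mod_self_left, Nat.mod_eq_of_lt hsN]
          have hdiv : (j:ℕ) / N = t := by
            rw [hjeq, Nat.add_mul_div_left _ _ hN, Nat.div_eq_of_lt hsN]; omega
          have hiff := hcut j z hjTN
          rw [hmod, hdiv] at hiff
          by_contra hle
          push_neg at hle
          have := hiff.mpr hle
          linarith
        have hX := hfail x hx.1 hx.2
        have hY := hfail y hy.1 hy.2
        -- outer radius bound
        obtain ⟨ρ, hρd, hρR, hballs⟩ : ∃ ρ : ℝ, ρ - hlev t ≤ d ∧ ρ ≤ R + 1 ∧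
            ∀ z : EuclideanSpace ℝ (Fin n),
              ((∀ l, z l ∈ Set.Icc (0:ℝ) 1) ∧
                ∀ j : Fin m, (j:ℕ) < s + N*t → 0 ≤ ⟪A j, z⟫ + B j) →
              ‖z - c‖ ≤ ρ := by
          cases t with
          | zero =>
            refine ⟨R, by rw [hlev0]; linarith, by linarith, ?_⟩
            intro z hz
            exact hcube_c z hz.1
          | succ t' =>
            refine ⟨hlev t' / γ, ?_, ?_, ?_⟩
            · have h1 := hdivle (hlev t') (hlev_pos t').le (hlev_le t')
              have h2 := hlev_step t'
              linarith
            · have h1 := hdivle (hlev t') (hlev_pos t').le (hlev_le t')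
              have := hlev_le t'
              linarith
            · intro z hz
              apply hrev t' z _ (by omega)
              intro j hj
              apply hz.2 j
              have : (t'+1)*N = N*(t'+1) := by ring
              omega
        have hρ0 : hlev t ≤ ρ := by
          have h1 : ⟪w s, x - c⟫ ≤ ‖x - c‖ := by
            calc ⟪w s, x - c⟫ ≤ ‖w s‖ * ‖x - c‖ := real_inner_le_norm _ _
              _ = ‖x - c‖ := by rw [hwunit s, one_mul]
          have h2 := hballs x hx.1
          linarith
        have hcap := aux_cap (w s) (x - c) (y - c) ρ (hlev t) (hwunit s)
          (hballs x hx.1) (hballs y hy.1) hX.le hY.le (hlev_pos t).le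
        have hxy : x - y = (x - c) - (y - c) := by abel
        have h2 : ‖x - y‖^2 ≤ δ^2 := by
          rw [hxy]
          have hlevR := hlev_le t
          have hlevpos := hlev_pos t
          nlinarith [hcap, hρd, hρR, hρ0, hdδ, hd]
        have h3 := Real.sqrt_le_sqrt h2
        rw [Real.sqrt_sq (norm_nonneg _), Real.sqrt_sq hδ.le] at h3
        rw [dist_eq_norm]
        exact h3
    · rw [Set.eq_empty_iff_forall_notMem]
      intro x hx
      simp only [Set.mem_setOf_eq] at hx
      have h := hx.2 ⟨(T+1)*N, by omega⟩
      have : A ⟨(T+1)*N, by omega⟩ = 0 ∧ B ⟨(T+1)*N, by omega⟩ = -1 := by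
        rw [hAdef, hBdef]
        simp only
        rw [if_neg (by omega), if_neg (by omega)]
        exact ⟨rfl, rfl⟩
      rw [this.1, this.2, inner_zero_left] at h
      linarith
end

section
/- For any continuous monotone function ψ : ℝ → ℝ, networks built as finite compositions of affine maps ℝ → ℝ and pointwise applications of ψ (i.e., width-1 ψ networks) are not dense in L¹([0,1], ℝ). Concretely, for the function f*(x) = 1 if x ∈ (1/3, 2/3) and f*(x) = 0 otherwise, every continuous monotone function f : [0,1] → ℝ satisfies ∫₀¹ |f(x) − f*(x)| dx ≥ 1/3. -/
open MeasureTheory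


/-- Hidden part of a width-1 `ψ` network: repeated application of `ψ ∘ (affine)`. -/
def hid1 (ψ : ℝ → ℝ) : List (ℝ × ℝ) → ℝ → ℝ
  | [], x => x
  | (a, b) :: l, x => hid1 ψ l (ψ (a * x + b))

lemma key1 (u v : ℝ) (huv : v ≤ u) : 1 ≤ |u| + |v - 1| := by
  rcases abs_cases u with ⟨h1, h2⟩ | ⟨h1, h2⟩ <;>
    rcases abs_cases (v - 1) with ⟨h3, h4⟩ | ⟨h3, h4⟩ <;> linarith

lemma mono_far (f : ℝ → ℝ) (hf : Continuous f) (hmono : Monotone f) :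
    (1 : ℝ) / 3 ≤ ∫ x in (0:ℝ)..1,
      |f x - (if x ∈ Set.Ioo ((1:ℝ)/3) ((2:ℝ)/3) then 1 else 0)| := by
  set g : ℝ → ℝ := fun x => |f x - (if x ∈ Set.Ioo ((1:ℝ)/3) ((2:ℝ)/3) then 1 else 0)| with hgdef
  have hind : ∀ a b : ℝ, IntervalIntegrable
      (fun x => if x ∈ Set.Ioo ((1:ℝ)/3) ((2:ℝ)/3) then (1:ℝ) else 0) volume a b := by
    intro a b
    have heq : (fun x => if x ∈ Set.Ioo ((1:ℝ)/3) ((2:ℝ)/3) then (1:ℝ) else 0)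
        = (Set.Ioo ((1:ℝ)/3) ((2:ℝ)/3)).indicator (fun _ => 1) := by
      funext x; simp [Set.indicator_apply]
    rw [heq, intervalIntegrable_iff]
    exact (MeasureTheory.integrableOn_const measure_Ioc_lt_top.ne enorm_ne_top).indicator measurableSet_Ioo
  have hg : ∀ a b : ℝ, IntervalIntegrable g volume a b := fun a b =>
    ((hf.intervalIntegrable a b).sub (hind a b)).abs
  have hg2 : IntervalIntegrable (fun y => g (y + 1/3)) volume (1/3) (2/3) := by
    have := (hg (2/3) 1).comp_add_right (1/3)
    norm_num at this ⊢
    convert this using 2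
  have hstep : (1:ℝ)/3 ≤ ∫ y in (1/3:ℝ)..(2/3), (g y + g (y + 1/3)) := by
    have h1 : (1:ℝ)/3 = ∫ y in (1/3:ℝ)..(2/3), (1:ℝ) := by simp; norm_num
    have h2 : ∫ y in (1/3:ℝ)..(2/3), (1:ℝ) ≤ ∫ y in (1/3:ℝ)..(2/3), (g y + g (y + 1/3)) := by
      apply intervalIntegral.integral_mono_ae_restrict (by norm_num)
        intervalIntegrable_const ((hg _ _).add hg2)
      rw [← MeasureTheory.Measure.restrict_congr_set MeasureTheory.Ioo_ae_eq_Icc]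
      refine (MeasureTheory.ae_restrict_iff' measurableSet_Ioo).2
        (Filter.Eventually.of_forall fun y hy => ?_)
      obtain ⟨hy1, hy2⟩ := hy
      have hgy : g y = |f y - 1| := by
        simp only [hgdef]; rw [if_pos (Set.mem_Ioo.2 ⟨hy1, hy2⟩)]
      have hnot : y + 1/3 ∉ Set.Ioo ((1:ℝ)/3) ((2:ℝ)/3) := by
        simp only [Set.mem_Ioo]; push_neg; intro _; linarith
      have hgy2 : g (y + 1/3) = |f (y + 1/3) - 0| := by
        simp only [hgdef]; rw [if_neg hnot]
      show (1:ℝ) ≤ g y + g (y + 1/3)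
      rw [hgy, hgy2, sub_zero]
      have := key1 (f (y + 1/3)) (f y) (hmono (by linarith : y ≤ y + 1/3))
      linarith
    linarith [h1, h2]
  have hsplit : ∫ y in (1/3:ℝ)..(2/3), (g y + g (y + 1/3))
      = (∫ y in (1/3:ℝ)..(2/3), g y) + ∫ y in (2/3:ℝ)..1, g y := by
    rw [intervalIntegral.integral_add (hg _ _) hg2]
    congr 1
    rw [intervalIntegral.integral_comp_add_right g (1/3)]
    norm_num
  have hnn : (0:ℝ) ≤ ∫ y in (0:ℝ)..(1/3), g y :=
    intervalIntegral.integral_nonneg (by norm_num) (fun x _ => abs_nonneg _)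
  have htot : (∫ y in (0:ℝ)..(1/3), g y) + ((∫ y in (1/3:ℝ)..(2/3), g y)
      + ∫ y in (2/3:ℝ)..1, g y) = ∫ y in (0:ℝ)..1, g y := by
    rw [intervalIntegral.integral_add_adjacent_intervals (hg _ _) (hg _ _),
      intervalIntegral.integral_add_adjacent_intervals (hg _ _) (hg _ _)]
  linarith [hstep, hsplit ▸ hstep]

lemma comp_cases {f g : ℝ → ℝ} (hg : Monotone g ∨ Antitone g)
    (hf : Monotone f ∨ Antitone f) : Monotone (g ∘ f) ∨ Antitone (g ∘ f) := by
  rcases hg with hg | hg <;> rcases hf with hf | hf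
  · exact Or.inl (hg.comp hf)
  · exact Or.inr (hg.comp_antitone hf)
  · exact Or.inr (hg.comp_monotone hf)
  · exact Or.inl (hg.comp hf)

lemma far (f : ℝ → ℝ) (hf : Continuous f) (hm : Monotone f ∨ Antitone f) :
    (1 : ℝ) / 3 ≤ ∫ x in (0:ℝ)..1,
      |f x - (if x ∈ Set.Ioo ((1:ℝ)/3) ((2:ℝ)/3) then 1 else 0)| := by
  rcases hm with hm | hm
  · exact mono_far f hf hm
  · set F : ℝ → ℝ := fun x => f (1 - x) with hF
    have hFc : Continuous F := hf.comp (continuous_const.sub continuous_id)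
    have hFm : Monotone F := fun x y hxy => hm (by linarith : 1 - y ≤ 1 - x)
    have key := mono_far F hFc hFm
    have hsym : ∀ x : ℝ, ((1 - x) ∈ Set.Ioo ((1:ℝ)/3) ((2:ℝ)/3)) ↔
        (x ∈ Set.Ioo ((1:ℝ)/3) ((2:ℝ)/3)) := by
      intro x; simp only [Set.mem_Ioo]; constructor <;> rintro ⟨h1, h2⟩ <;>
        exact ⟨by linarith, by linarith⟩
    have heq : (∫ x in (0:ℝ)..1,
          |F x - (if x ∈ Set.Ioo ((1:ℝ)/3) ((2:ℝ)/3) then 1 else 0)|)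
        = ∫ x in (0:ℝ)..1,
          |f x - (if x ∈ Set.Ioo ((1:ℝ)/3) ((2:ℝ)/3) then 1 else 0)| := by
      have h1 : (∫ x in (0:ℝ)..1,
            |F x - (if x ∈ Set.Ioo ((1:ℝ)/3) ((2:ℝ)/3) then 1 else 0)|)
          = ∫ x in (0:ℝ)..1, (fun t =>
            |f t - (if t ∈ Set.Ioo ((1:ℝ)/3) ((2:ℝ)/3) then 1 else 0)|) (1 - x) := by
        apply intervalIntegral.integral_congr
        intro x _
        simp only [hF]
        rw [if_congr (hsym x) rfl rfl]
      have h2 := intervalIntegral.integral_comp_sub_left (a := 0) (b := 1)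
        (fun t => |f t - (if t ∈ Set.Ioo ((1:ℝ)/3) ((2:ℝ)/3) then 1 else 0)|) 1
      norm_num at h2
      rw [h1]; simp only [Set.mem_Ioo]; exact h2
    linarith [heq ▸ key]

lemma hid1_props (ψ : ℝ → ℝ) (hc : Continuous ψ) (hm : Monotone ψ ∨ Antitone ψ) :
    ∀ l : List (ℝ × ℝ), Continuous (hid1 ψ l) ∧
      (Monotone (hid1 ψ l) ∨ Antitone (hid1 ψ l))
  | [] => ⟨continuous_id, Or.inl monotone_id⟩
  | (a, b) :: l => by
    obtain ⟨ihc, ihm⟩ := hid1_props ψ hc hm l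
    have heq : hid1 ψ ((a, b) :: l) = hid1 ψ l ∘ fun x => ψ (a * x + b) := rfl
    have haff : Monotone (fun x : ℝ => a * x + b) ∨ Antitone (fun x : ℝ => a * x + b) := by
      rcases le_total 0 a with h | h
      · exact Or.inl fun x y hxy => by simp only; nlinarith
      · exact Or.inr fun x y hxy => by simp only; nlinarith
    have hin : Monotone (ψ ∘ fun x : ℝ => a * x + b) ∨
        Antitone (ψ ∘ fun x : ℝ => a * x + b) := comp_cases hm haff
    rw [heq]
    refine ⟨ihc.comp (hc.comp (by continuity)), comp_cases ihm hin⟩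

/-- For any continuous monotone `ψ : ℝ → ℝ`, width-1 `ψ` networks
(compositions `t_L ∘ ψ ∘ ⋯ ∘ ψ ∘ t₁` of affine maps `ℝ → ℝ` and pointwise `ψ`) are not
dense in `L¹([0,1])`: every such network `f` is `(1/3)`-far in `L¹` from the indicator
`f*` of `(1/3, 2/3)`. -/
theorem stmt5 (ψ : ℝ → ℝ) (hc : Continuous ψ) (hm : Monotone ψ ∨ Antitone ψ)
    (l : List (ℝ × ℝ)) (aL bL : ℝ) :
    (1 : ℝ) / 3 ≤
      ∫ x in (0:ℝ)..1,
        |(aL * hid1 ψ l x + bL) - (if x ∈ Set.Ioo ((1:ℝ)/3) ((2:ℝ)/3) then 1 else 0)| := by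
  obtain ⟨hhc, hhm⟩ := hid1_props ψ hc hm l
  have houter : Monotone (fun t : ℝ => aL * t + bL) ∨ Antitone (fun t : ℝ => aL * t + bL) := by
    rcases le_total 0 aL with h | h
    · exact Or.inl fun x y hxy => by simp only; nlinarith
    · exact Or.inr fun x y hxy => by simp only; nlinarith
  exact far (fun x => aL * hid1 ψ l x + bL)
    ((continuous_const.mul hhc).add continuous_const) (comp_cases houter hhm)
end

section
/- Every monotone (nondecreasing or nonincreasing) continuous function f : [0,1] → ℝ satisfies ∫₀¹ |f(x) − f*(x)| dx ≥ 1/3, where f*(x) = 1 for x ∈ (1/3, 2/3) and f*(x) = 0 otherwise. The proof splits on c := f(2/3): if c ≤ 0 the error on [1/3,2/3] is at least 1/3; if c ≥ 1 the error on [2/3,1] is at least 1/3; if 0 < c < 1 the combined error on [1/3,2/3] ∪ [2/3,1] is at least (1−c)/3 + c/3 = 1/3. -/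
/-!
With `c = f (2/3)` for nondecreasing `f`, the error is at least `1 - c` on `(1/3, 2/3)`, where the
target is `1` and `f ≤ c`, and at least `c` on `(2/3, 1)`, where the target is `0` and `f ≥ c`;
these contribute `(1 - c)/3 + c/3 = 1/3`. The reflection `x ↦ 1 - x` fixes the target and turns a
nonincreasing `f` into a nondecreasing one.
-/

open MeasureTheory Set intervalIntegral

lemma mul_sub_le_integral_of_le_on_Ioo {g : ℝ → ℝ} {a b c : ℝ} (hab : a ≤ b)
    (hg : IntervalIntegrable g volume a b) (h : ∀ x ∈ Ioo a b, c ≤ g x) :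
    c * (b - a) ≤ ∫ x in a..b, g x := by
  simpa [mul_comm] using integral_mono_on_of_le_Ioo hab intervalIntegrable_const hg h

lemma MonotoneOn.intervalIntegrable_abs_sub_indicator_Ioo {f : ℝ → ℝ} {a b : ℝ}
    (hf : MonotoneOn f (Icc a b)) (hab : a ≤ b) (s t : ℝ) :
    IntervalIntegrable (fun x => |f x - (Ioo s t).indicator 1 x|) volume a b := by
  have hind : Integrable ((Ioo s t).indicator (1 : ℝ → ℝ)) :=
    (integrableOn_const measure_Ioo_lt_top.ne).integrable_indicator measurableSet_Ioo
  rw [← uIcc_of_le hab] at hf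
  exact (hf.intervalIntegrable.sub hind.intervalIntegrable).abs

lemma indicator_Ioo_const_sub (a b c x : ℝ) :
    (Ioo a b).indicator (1 : ℝ → ℝ) (c - x) = (Ioo (c - b) (c - a)).indicator 1 x := by
  rw [← preimage_const_sub_Ioo, ← indicator_comp_right, Pi.one_comp]

lemma AntitoneOn.monotoneOn_comp_one_sub {f : ℝ → ℝ} (hf : AntitoneOn f (Icc 0 1)) :
    MonotoneOn (fun x => f (1 - x)) (Icc 0 1) := fun x hx y hy hxy =>
  hf ⟨by linarith [hy.2], by linarith [hy.1]⟩ ⟨by linarith [hx.2], by linarith [hx.1]⟩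
    (by linarith)

lemma one_third_le_integral_abs_sub_indicator_of_monotoneOn {f : ℝ → ℝ}
    (hf : MonotoneOn f (Icc 0 1)) :
    1 / 3 ≤ ∫ x in (0 : ℝ)..1, |f x - (Ioo (1 / 3 : ℝ) (2 / 3)).indicator 1 x| := by
  set g := fun x => |f x - (Ioo (1 / 3 : ℝ) (2 / 3)).indicator 1 x|
  have hg {a b : ℝ} (ha : 0 ≤ a) (hab : a ≤ b) (hb : b ≤ 1) : IntervalIntegrable g volume a b :=
    (hf.mono (Icc_subset_Icc ha hb)).intervalIntegrable_abs_sub_indicator_Ioo hab _ _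
  have hmid : (1 - f (2 / 3)) * (2 / 3 - 1 / 3) ≤ ∫ x in (1 / 3 : ℝ)..(2 / 3), g x := by
    refine mul_sub_le_integral_of_le_on_Ioo (by norm_num)
      (hg (by norm_num) (by norm_num) (by norm_num)) fun x hx => ?_
    have hfx : f x ≤ f (2 / 3) :=
      hf ⟨by linarith [hx.1], by linarith [hx.2]⟩ ⟨by norm_num, by norm_num⟩ hx.2.le
    simp only [g, indicator_of_mem hx, Pi.one_apply]
    linarith [neg_abs_le (f x - 1)]
  have hright : f (2 / 3) * (1 - 2 / 3) ≤ ∫ x in (2 / 3 : ℝ)..1, g x := by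
    refine mul_sub_le_integral_of_le_on_Ioo (by norm_num)
      (hg (by norm_num) (by norm_num) le_rfl) fun x hx => ?_
    have hfx : f (2 / 3) ≤ f x :=
      hf ⟨by norm_num, by norm_num⟩ ⟨by linarith [hx.1], hx.2.le⟩ hx.1.le
    simp only [g, indicator_of_notMem (fun h : x ∈ Ioo _ _ => h.2.not_gt hx.1), sub_zero]
    linarith [le_abs_self (f x)]
  calc (1 : ℝ) / 3 ≤ ∫ x in (1 / 3 : ℝ)..1, g x := by
        rw [← integral_add_adjacent_intervals (b := 2 / 3)
          (hg (by norm_num) (by norm_num) (by norm_num)) (hg (by norm_num) (by norm_num) le_rfl)]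
        linarith
    _ ≤ ∫ x in (0 : ℝ)..1, g x :=
        integral_mono_interval (by norm_num) (by norm_num) le_rfl
          (Filter.Eventually.of_forall fun x => abs_nonneg _) (hg le_rfl zero_le_one le_rfl)

lemma one_third_le_integral_abs_sub_indicator_of_antitoneOn {f : ℝ → ℝ}
    (hf : AntitoneOn f (Icc 0 1)) :
    1 / 3 ≤ ∫ x in (0 : ℝ)..1, |f x - (Ioo (1 / 3 : ℝ) (2 / 3)).indicator 1 x| := by
  have hsymm (x : ℝ) : (Ioo (1 / 3 : ℝ) (2 / 3)).indicator (1 : ℝ → ℝ) (1 - x) =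
      (Ioo (1 / 3 : ℝ) (2 / 3)).indicator 1 x := by
    rw [indicator_Ioo_const_sub]; norm_num
  have hreflect := integral_comp_sub_left
    (fun x => |f x - (Ioo (1 / 3 : ℝ) (2 / 3)).indicator 1 x|) 1 (a := 0) (b := 1)
  simp only [hsymm, sub_self, sub_zero] at hreflect
  rw [← hreflect]
  exact one_third_le_integral_abs_sub_indicator_of_monotoneOn hf.monotoneOn_comp_one_sub

theorem stmt6_general (f : ℝ → ℝ)
    (hm : MonotoneOn f (Set.Icc 0 1) ∨ AntitoneOn f (Set.Icc 0 1)) :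
    (1 : ℝ) / 3 ≤
      ∫ x in (0:ℝ)..1,
        |f x - (if x ∈ Set.Ioo ((1:ℝ)/3) ((2:ℝ)/3) then 1 else 0)| := by
  suffices 1 / 3 ≤ ∫ x in (0 : ℝ)..1, |f x - (Ioo (1 / 3 : ℝ) (2 / 3)).indicator 1 x| by
    simpa [indicator_apply] using this
  exact hm.elim one_third_le_integral_abs_sub_indicator_of_monotoneOn
    one_third_le_integral_abs_sub_indicator_of_antitoneOn

/-- Every continuous function `f : [0,1] → ℝ` that is monotone
(nondecreasing or nonincreasing) on `[0,1]` satisfies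
`∫₀¹ |f(x) − f*(x)| dx ≥ 1/3`, where `f*` is the indicator of `(1/3, 2/3)`. -/
theorem stmt6 (f : ℝ → ℝ) (hc : ContinuousOn f (Set.Icc 0 1))
    (hm : MonotoneOn f (Set.Icc 0 1) ∨ AntitoneOn f (Set.Icc 0 1)) :
    (1 : ℝ) / 3 ≤
      ∫ x in (0:ℝ)..1,
        |f x - (if x ∈ Set.Ioo ((1:ℝ)/3) ((2:ℝ)/3) then 1 else 0)| :=
  stmt6_general f hm
end

section
/- Define h_n(x) = (1/n)·Mish(nx) where Mish(y) = y·tanh(log(1 + exp(y))). Then for all x ∈ ℝ and n ∈ ℕ, |h_n(x) − ReLU(x)| ≤ 1/n. In particular, for x ≥ 0, |h_n(x) − x| = 2x/((1+exp(nx))² + 1) ≤ 1/n, and for x < 0, |h_n(x)| ≤ (−x)·exp(nx) ≤ 1/(en). -/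
/-!
Write `E = exp (n x)` and `D = (1 + E)² + 1`. Since `exp (log (1 + E)) = 1 + E`, the hyperbolic
tangent is the rational function `tanh (log (1 + E)) = ((1 + E)² - 1) / D`, so
`h_n(x) = x · ((1 + E)² - 1) / D`. For `x ≥ 0` the error is `x - h_n(x) = 2x / D`, and
`2nx ≤ 2(1 + E) ≤ D` because `E ≥ 1 + nx`. For `x < 0` the tangent lies in `[0, E]`, so
`|h_n(x)| ≤ -x E`, and `t e^{-t} ≤ e^{-1}` with `t = -nx` gives `-x E ≤ 1/(e n) ≤ 1/n`.
-/

open Real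

lemma tanh_log_one_add_exp (u : ℝ) :
    tanh (log (1 + exp u)) = ((1 + exp u) ^ 2 - 1) / ((1 + exp u) ^ 2 + 1) := by
  have hA : 0 < 1 + exp u := by positivity
  rw [tanh_eq_sinh_div_cosh, sinh_eq, cosh_eq, exp_neg, exp_log hA]
  field_simp

lemma one_sub_tanh_log_one_add_exp (u : ℝ) :
    1 - tanh (log (1 + exp u)) = 2 / ((1 + exp u) ^ 2 + 1) := by
  rw [tanh_log_one_add_exp]
  field_simp
  ring

lemma tanh_log_one_add_exp_nonneg (u : ℝ) : 0 ≤ tanh (log (1 + exp u)) := by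
  rw [tanh_log_one_add_exp]
  have := exp_pos u
  apply div_nonneg <;> nlinarith

lemma tanh_log_one_add_exp_le_exp (u : ℝ) : tanh (log (1 + exp u)) ≤ exp u := by
  rw [tanh_log_one_add_exp, div_le_iff₀ (by positivity)]
  have := exp_pos u
  nlinarith [pow_pos this 3]

lemma two_mul_le_sq_one_add_exp_add_one (u : ℝ) : 2 * u ≤ (1 + exp u) ^ 2 + 1 := by
  nlinarith [add_one_le_exp u, two_mul_le_add_sq (1 + exp u) 1]

lemma neg_mul_exp_mul_le {c : ℝ} (hc : 0 < c) (x : ℝ) :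
    -x * exp (c * x) ≤ 1 / (exp 1 * c) := by
  have key := mul_exp_neg_le_exp_neg_one (-(c * x))
  rw [neg_neg, exp_neg] at key
  rw [one_div, mul_inv, ← div_eq_mul_inv, le_div_iff₀ hc]
  linarith

/-- With `h_n(x) = (1/n)·Mish(nx)` where
`Mish(y) = y·tanh(log(1+e^y))`: `|h_n(x) − ReLU(x)| ≤ 1/n` for all `x`; for `x ≥ 0`,
`|h_n(x) − x| = 2x/((1+e^{nx})² + 1) ≤ 1/n`, and for `x < 0`,
`|h_n(x)| ≤ (−x)·e^{nx} ≤ 1/(en)`. -/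
theorem stmt11 (n : ℕ) (hn : 0 < n) (x : ℝ) :
    |(1 / (n : ℝ)) * ((n : ℝ) * x * Real.tanh (Real.log (1 + Real.exp ((n : ℝ) * x)))) -
        max x 0| ≤ 1 / (n : ℝ) ∧
    (0 ≤ x →
      |(1 / (n : ℝ)) * ((n : ℝ) * x * Real.tanh (Real.log (1 + Real.exp ((n : ℝ) * x)))) - x| =
          2 * x / ((1 + Real.exp ((n : ℝ) * x)) ^ 2 + 1) ∧
      2 * x / ((1 + Real.exp ((n : ℝ) * x)) ^ 2 + 1) ≤ 1 / (n : ℝ)) ∧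
    (x < 0 →
      |(1 / (n : ℝ)) * ((n : ℝ) * x * Real.tanh (Real.log (1 + Real.exp ((n : ℝ) * x))))| ≤
          (-x) * Real.exp ((n : ℝ) * x) ∧
      (-x) * Real.exp ((n : ℝ) * x) ≤ 1 / (Real.exp 1 * n)) := by
  have hn0 : (0 : ℝ) < n := by exact_mod_cast hn
  set T := tanh (log (1 + exp ((n : ℝ) * x)))
  have hscale : 1 / (n : ℝ) * (n * x * T) = x * T := by field_simp
  simp only [hscale]
  have hpos (hx : 0 ≤ x) : |x * T - x| = 2 * x / ((1 + exp (n * x)) ^ 2 + 1) ∧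
      2 * x / ((1 + exp (n * x)) ^ 2 + 1) ≤ 1 / n := by
    have herr : x * T - x = -(x * (1 - T)) := by ring
    refine ⟨?_, ?_⟩
    · rw [herr, abs_neg, one_sub_tanh_log_one_add_exp, abs_of_nonneg (by positivity)]
      ring
    · rw [div_le_div_iff₀ (by positivity) hn0]
      linarith [two_mul_le_sq_one_add_exp_add_one (n * x)]
  have hneg (hx : x < 0) : |x * T| ≤ -x * exp (n * x) ∧ -x * exp (n * x) ≤ 1 / (exp 1 * n) := by
    refine ⟨?_, neg_mul_exp_mul_le hn0 x⟩
    rw [abs_mul, abs_of_neg hx, abs_of_nonneg (tanh_log_one_add_exp_nonneg _)]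
    exact mul_le_mul_of_nonneg_left (tanh_log_one_add_exp_le_exp _) (by linarith)
  refine ⟨?_, hpos, hneg⟩
  rcases le_or_gt 0 x with hx | hx
  · rw [max_eq_left hx, (hpos hx).1]
    exact (hpos hx).2
  · have he : (n : ℝ) ≤ exp 1 * n := le_mul_of_one_le_left hn0.le (one_le_exp zero_le_one)
    rw [max_eq_right hx.le, sub_zero]
    exact (hneg hx).1.trans ((hneg hx).2.trans (one_div_le_one_div_of_le hn0 he))
end

section
/- For any m ∈ ℕ, any points 0 ≤ α₁ < α₂ < ⋯ < α_m ≤ 1 and any values β₁, …, β_m ∈ ℝ, there exists a function f : [0,1] → ℝ expressible as a composition of affine maps ℝ² → ℝ² and coordinatewise ReLU (i.e., a ReLU network of width 2) such that f(α_i) = β_i for all i ∈ [m]. -/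
open Matrix

/-- Coordinatewise ReLU on `ℝ²`. -/
noncomputable def relu2 (v : Fin 2 → ℝ) : Fin 2 → ℝ := fun i => max (v i) 0

/-- Hidden layers of a width-2 ReLU network: repeated `ReLU ∘ affine`. -/
noncomputable def reluLayers2 : List (Matrix (Fin 2) (Fin 2) ℝ × (Fin 2 → ℝ)) →
    (Fin 2 → ℝ) → (Fin 2 → ℝ)
  | [], v => v
  | (A, b) :: l, v => reluLayers2 l (relu2 (A.mulVec v + b))

/-- `f : ℝ → ℝ` is a ReLU network of width 2: `f = t_L ∘ φ ∘ ⋯ ∘ φ ∘ t₁` with affine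
`t₁ : ℝ → ℝ²`, affine middle layers `ℝ² → ℝ²`, affine output `t_L : ℝ² → ℝ`, and
coordinatewise ReLU `φ`. -/
def IsReLUNet2 (f : ℝ → ℝ) : Prop :=
  ∃ (w₁ c₁ : Fin 2 → ℝ) (l : List (Matrix (Fin 2) (Fin 2) ℝ × (Fin 2 → ℝ)))
    (wL : Fin 2 → ℝ) (bL : ℝ),
    ∀ x : ℝ, f x = wL ⬝ᵥ reluLayers2 l (relu2 (fun i => w₁ i * x + c₁ i)) + bL

/-! ### Auxiliary development -/

noncomputable def mkLayer (p : ℝ × ℝ) : Matrix (Fin 2) (Fin 2) ℝ × (Fin 2 → ℝ) :=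
  (![![1,0],![p.2,1]], ![-p.1, 0])

noncomputable def acc : List (ℝ × ℝ) → ℝ → ℝ
  | [], _ => 0
  | (δ,a) :: t, u => a * u + acc t (max (u - δ) 0)

lemma net_eval : ∀ (P : List (ℝ × ℝ)), (∀ p ∈ P, 0 ≤ p.1) →
    ∀ u s : ℝ, 0 ≤ u → u * (P.map (fun p => |p.2|)).sum ≤ s →
    reluLayers2 (P.map mkLayer) ![u, s] =
      ![max (u - (P.map Prod.fst).sum) 0, s + acc P u] := by
  intro P
  induction P with
  | nil =>
      intro _ u s hu _
      funext i
      fin_cases i <;> simp [reluLayers2, acc, max_eq_left hu]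
  | cons p t ih =>
      rcases p with ⟨δ, a⟩
      intro hδ u s hu hs
      have hT : (0:ℝ) ≤ (t.map (fun p => |p.2|)).sum := by
        apply List.sum_nonneg; intro x hx
        simp only [List.mem_map] at hx; obtain ⟨q, _, rfl⟩ := hx; exact abs_nonneg _
      have hδ0 : (0:ℝ) ≤ δ := hδ (δ, a) (by simp)
      have hsum : u * ((δ, a) :: t |>.map (fun p => |p.2|)).sum
          = u * |a| + u * (t.map (fun p => |p.2|)).sum := by
        simp [mul_add]
      have hau : -(u * |a|) ≤ a * u := by
        rcases abs_cases a with ⟨h1, _⟩ | ⟨h1, _⟩ <;> nlinarith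
      have hs' : max (u - δ) 0 * (t.map (fun p => |p.2|)).sum ≤ s + a * u := by
        have h1 : max (u - δ) 0 ≤ u := by
          rcases le_total (u - δ) 0 with h | h
          · rw [max_eq_right h]; exact hu
          · rw [max_eq_left h]; linarith
        have : max (u - δ) 0 * (t.map (fun p => |p.2|)).sum
            ≤ u * (t.map (fun p => |p.2|)).sum := by
          exact mul_le_mul_of_nonneg_right h1 hT
        rw [hsum] at hs
        linarith
      have hs0 : 0 ≤ s + a * u := by
        have := mul_nonneg (le_max_right (u - δ) 0) hT
        linarith
      have hfirst : relu2 (![![(1:ℝ),0],![a,1]] *ᵥ ![u, s] + ![-δ, 0])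
          = ![max (u - δ) 0, s + a * u] := by
        funext i
        fin_cases i <;>
          simp [relu2, Matrix.mulVec, dotProduct, Fin.sum_univ_two]
        · ring_nf
        · rw [show a * u + s = s + a * u by ring, max_eq_left hs0]
      have := ih (fun q hq => hδ q (by simp [hq])) (max (u - δ) 0) (s + a * u)
        (le_max_right _ _) hs'
      calc reluLayers2 (((δ,a) :: t).map mkLayer) ![u, s]
          = reluLayers2 (t.map mkLayer) ![max (u - δ) 0, s + a * u] := by
            simp only [List.map_cons, reluLayers2, hfirst, mkLayer]
        _ = ![max (max (u - δ) 0 - (t.map Prod.fst).sum) 0,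
              s + a * u + acc t (max (u - δ) 0)] := this
        _ = ![max (u - (((δ,a) :: t).map Prod.fst).sum) 0, s + acc ((δ,a) :: t) u] := by
            have hTδ : (0:ℝ) ≤ (t.map Prod.fst).sum := by
              apply List.sum_nonneg; intro x hx
              simp only [List.mem_map] at hx; obtain ⟨q, hq, rfl⟩ := hx
              exact hδ q (by simp [hq])
            have : max (max (u - δ) 0 - (t.map Prod.fst).sum) 0
                = max (u - (δ + (t.map Prod.fst).sum)) 0 := by
              rcases le_total (u - δ) 0 with h | h
              · rw [max_eq_right h, max_eq_right (by linarith), max_eq_right (by linarith)]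
              · rw [max_eq_left h]; ring_nf
            funext i
            fin_cases i <;> simp [acc, this]
            · ring_nf

noncomputable def mkP (α a : ℕ → ℝ) : ℕ → ℕ → List (ℝ × ℝ)
  | _, 0 => []
  | j, c+1 => (α (j+1) - α j, a j) :: mkP α a (j+1) c

lemma mkP_fst_nonneg (α a : ℕ → ℝ) (hm : ∀ j k : ℕ, j ≤ k → α j ≤ α k) :
    ∀ c j, ∀ p ∈ mkP α a j c, 0 ≤ p.1 := by
  intro c
  induction c with
  | zero => intro j p hp; simp [mkP] at hp
  | succ c ih =>
      intro j p hp
      simp only [mkP, List.mem_cons] at hp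
      rcases hp with rfl | hp
      · simp; linarith [hm j (j+1) (by omega)]
      · exact ih (j+1) p hp

lemma acc_eval (α a : ℕ → ℝ) (hm : ∀ j k : ℕ, j ≤ k → α j ≤ α k) :
    ∀ c j i, acc (mkP α a j c) (max (α i - α j) 0) =
      ∑ k ∈ Finset.range c, a (j + k) * max (α i - α (j + k)) 0 := by
  intro c
  induction c with
  | zero => intro j i; simp [mkP, acc]
  | succ c ih =>
      intro j i
      have hnext : max (max (α i - α j) 0 - (α (j+1) - α j)) 0
          = max (α i - α (j+1)) 0 := by
        rcases le_total (α i - α j) 0 with h | h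
        · rw [max_eq_right h, max_eq_right (by linarith [hm j (j+1) (by omega)]),
            max_eq_right (by linarith [hm j (j+1) (by omega)])]
        · rw [max_eq_left h]; ring_nf
      simp only [mkP, acc, hnext, ih (j+1) i]
      rw [Finset.sum_range_succ', add_zero, add_comm]
      congr 1
      exact Finset.sum_congr rfl fun k _ => by rw [show j + (k+1) = j+1+k by omega]

noncomputable def islope (α β : ℕ → ℝ) (k : ℕ) : ℝ := (β (k+1) - β k) / (α (k+1) - α k)

noncomputable def coeff (α β : ℕ → ℝ) : ℕ → ℝ
  | 0 => islope α β 0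
  | k+1 => islope α β (k+1) - islope α β k

lemma coeff_sum (α β : ℕ → ℝ) (i : ℕ) :
    ∑ k ∈ Finset.range (i+1), coeff α β k = islope α β i := by
  induction i with
  | zero => simp [coeff]
  | succ i ih => rw [Finset.sum_range_succ, ih]; simp [coeff]

lemma interp (α β : ℕ → ℝ) (n : ℕ) (hs : ∀ k, k + 1 ≤ n → α k < α (k+1)) :
    ∀ i, i ≤ n → β 0 + ∑ k ∈ Finset.range i, coeff α β k * (α i - α k) = β i := by
  intro i
  induction i with
  | zero => simp
  | succ i ih =>
      intro hin
      have hi := ih (by omega)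
      have hne : α (i+1) - α i ≠ 0 := by
        have := hs i hin; linarith
      have h1 : ∑ k ∈ Finset.range (i+1), coeff α β k * (α (i+1) - α k)
          = ∑ k ∈ Finset.range (i+1), coeff α β k * (α i - α k)
            + (α (i+1) - α i) * ∑ k ∈ Finset.range (i+1), coeff α β k := by
        rw [Finset.mul_sum, ← Finset.sum_add_distrib]
        apply Finset.sum_congr rfl; intro k _; ring
      rw [h1, Finset.sum_range_succ, coeff_sum]
      have : islope α β i * (α (i+1) - α i) = β (i+1) - β i := by
        rw [islope, div_mul_cancel₀ _ hne]
      nlinarith [this]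

lemma key (n : ℕ) (α β : ℕ → ℝ) (hm : ∀ j k : ℕ, j ≤ k → α j ≤ α k)
    (hstr : ∀ k, k + 1 ≤ n → α k < α (k+1)) :
    ∃ f : ℝ → ℝ, IsReLUNet2 f ∧ ∀ i ≤ n, f (α i) = β i := by
  set a := coeff α β with ha
  set P := mkP α a 0 n with hP
  set T := (P.map (fun p => |p.2|)).sum with hTdef
  have hT : (0:ℝ) ≤ T := by
    apply List.sum_nonneg; intro x hx
    simp only [hTdef, List.mem_map] at hx; obtain ⟨q, _, rfl⟩ := hx; exact abs_nonneg _
  set C := (α n - α 0) * T with hC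
  have hC0 : (0:ℝ) ≤ C := by
    apply mul_nonneg _ hT
    linarith [hm 0 n (Nat.zero_le n)]
  refine ⟨fun x => ![0,1] ⬝ᵥ reluLayers2 (P.map mkLayer)
      (relu2 (fun j => ![1,0] j * x + ![-(α 0), C] j)) + (β 0 - C),
    ⟨![1,0], ![-(α 0), C], P.map mkLayer, ![0,1], β 0 - C, fun x => rfl⟩, ?_⟩
  intro i hin
  have hu : (0:ℝ) ≤ α i - α 0 := by linarith [hm 0 i (Nat.zero_le i)]
  have hrelu : relu2 (fun j => ![1,0] j * α i + ![-(α 0), C] j)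
      = ![α i - α 0, C] := by
    funext j
    fin_cases j <;> simp [relu2]
    · rw [show (α i + -α 0) = α i - α 0 by ring, max_eq_left hu]
    · exact hC0
  have hsle : (α i - α 0) * T ≤ C := by
    rw [hC]
    apply mul_le_mul_of_nonneg_right _ hT
    linarith [hm i n hin]
  have hnet := net_eval P (mkP_fst_nonneg α a hm n 0) (α i - α 0) C hu hsle
  have hacc : acc P (α i - α 0)
      = ∑ k ∈ Finset.range n, a k * max (α i - α k) 0 := by
    rw [show α i - α 0 = max (α i - α 0) 0 from (max_eq_left hu).symm, hP,
      acc_eval α a hm n 0 i]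
    exact Finset.sum_congr rfl fun k _ => by rw [Nat.zero_add]
  have hsum : ∑ k ∈ Finset.range n, a k * max (α i - α k) 0
      = ∑ k ∈ Finset.range i, a k * (α i - α k) := by
    rw [← Finset.sum_subset (Finset.range_subset_range.2 hin) ?h0]
    · exact Finset.sum_congr rfl fun k hk => by
        have hk' : k < i := Finset.mem_range.1 hk
        rw [max_eq_left (by linarith [hm k i (le_of_lt hk')])]
    · intro x hx hx'
      have : i ≤ x := by
        simp only [Finset.mem_range, not_lt] at hx'; exact hx'
      rw [max_eq_right (by linarith [hm i x this]), mul_zero]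
  have hdot : ∀ u v : ℝ, ![(0:ℝ),1] ⬝ᵥ ![u, v] = v := by
    intro u v; simp [dotProduct, Fin.sum_univ_two]
  simp only [hrelu, hnet, hacc, hsum, hdot]
  have := interp α β n hstr i hin
  linarith [this]

/-- Any finite data `0 ≤ α₁ < ⋯ < α_m ≤ 1`, `β₁,…,β_m ∈ ℝ` can be
interpolated by a width-2 ReLU network on `[0,1]`. -/
theorem stmt16 (m : ℕ) (α β : Fin m → ℝ) (hα : ∀ i, α i ∈ Set.Icc (0:ℝ) 1)
    (hmono : StrictMono α) :
    ∃ f : ℝ → ℝ, IsReLUNet2 f ∧ ∀ i, f (α i) = β i := by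
  match m with
  | 0 =>
      refine ⟨fun x => ![0,0] ⬝ᵥ reluLayers2 []
          (relu2 (fun i => ![0,0] i * x + ![0,0] i)) + 0,
        ⟨![0,0], ![0,0], [], ![0,0], 0, fun x => rfl⟩, fun i => i.elim0⟩
  | n + 1 =>
      set α' : ℕ → ℝ := fun i => α ⟨min i n, by omega⟩ with hα'
      set β' : ℕ → ℝ := fun i => β ⟨min i n, by omega⟩ with hβ'
      have hm : ∀ j k : ℕ, j ≤ k → α' j ≤ α' k := by
        intro j k hjk
        apply hmono.monotone
        simp only [Fin.mk_le_mk]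
        omega
      have hstr : ∀ k, k + 1 ≤ n → α' k < α' (k+1) := by
        intro k hk
        apply hmono
        simp only [Fin.mk_lt_mk]
        omega
      obtain ⟨f, hf, hval⟩ := key n α' β' hm hstr
      refine ⟨f, hf, fun i => ?_⟩
      have h1 : α' ↑i = α i := by
        simp only [hα']
        congr 1
        exact Fin.ext (by simp; omega)
      have h2 : β' ↑i = β i := by
        simp only [hβ']
        congr 1
        exact Fin.ext (by simp; omega)
      rw [← h1, ← h2]
      exact hval ↑i (by omega)
end

section
/- For any compact interval I ⊂ ℝ and any continuous piecewise linear function f* : I → ℝ with P linear pieces, there exists a ReLU network f of width 2 (a composition of affine maps with hidden dimension 2 and coordinatewise ReLU) such that f(x) = f*(x) for all x ∈ I. -/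
open Matrix

lemma reluLayers2_append (l₁ l₂ : List (Matrix (Fin 2) (Fin 2) ℝ × (Fin 2 → ℝ)))
    (v : Fin 2 → ℝ) :
    reluLayers2 (l₁ ++ l₂) v = reluLayers2 l₂ (reluLayers2 l₁ v) := by
  induction l₁ generalizing v with
  | nil => rfl
  | cons p l ih =>
    obtain ⟨A, b⟩ := p
    simp only [List.cons_append, reluLayers2]
    exact ih _

lemma reluLayers2_nonneg (l : List (Matrix (Fin 2) (Fin 2) ℝ × (Fin 2 → ℝ)))
    (v : Fin 2 → ℝ) (hv : ∀ i, 0 ≤ v i) (i : Fin 2) :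
    0 ≤ reluLayers2 l v i := by
  induction l generalizing v with
  | nil => exact hv i
  | cons p l ih =>
    obtain ⟨A, b⟩ := p
    exact ih _ (fun j => le_max_right _ _)

lemma max_shift {x c d : ℝ} (h : c ≤ d) :
    max (max (x - c) 0 + (c - d)) 0 = max (x - d) 0 := by
  rcases le_total x c with h1 | h1 <;> rcases le_total x d with h2 | h2 <;>
    simp only [max_def] <;> split_ifs <;> linarith

lemma relu2_layer (d k1 k2 u v : ℝ) :
    relu2 ((!![1, d; 0, 1]).mulVec ![u, v] + ![k1, k2])
      = ![max (u + d * v + k1) 0, max (v + k2) 0] := by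
  funext i
  fin_cases i <;>
    simp [relu2, Matrix.mulVec, dotProduct, Fin.sum_univ_two] <;>
    first
    | rfl
    | (congr 1; ring)

lemma relu2_first (w0 w1 c0 c1 x : ℝ) :
    relu2 (fun i => ![w0, w1] i * x + ![c0, c1] i)
      = ![max (w0 * x + c0) 0, max (w1 * x + c1) 0] := by
  funext i; fin_cases i <;> simp [relu2]

lemma reluLayers2_single (M : Matrix (Fin 2) (Fin 2) ℝ) (bias v : Fin 2 → ℝ) :
    reluLayers2 [(M, bias)] v = relu2 (M.mulVec v + bias) := rfl

/-- Every continuous piecewise linear function `f*` with `P` linear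
pieces on a compact interval `I = [x₀, x_P]` (with breakpoints `x₀ ≤ x₁ ≤ ⋯ ≤ x_P` and
affine pieces `a_i·x + b_i` on `[x_{i-1}, x_i]`) is exactly represented on `I` by some
width-2 ReLU network. -/
theorem stmt17 (P : ℕ) (hP : 0 < P) (xb : Fin (P + 1) → ℝ) (hmono : Monotone xb)
    (a b : Fin P → ℝ) (fstar : ℝ → ℝ)
    (hpieces : ∀ i : Fin P, ∀ y ∈ Set.Icc (xb i.castSucc) (xb i.succ),
      fstar y = a i * y + b i) :
    ∃ f : ℝ → ℝ, IsReLUNet2 f ∧ ∀ y ∈ Set.Icc (xb 0) (xb (Fin.last P)), f y = fstar y := by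
  classical
  set x0 := xb 0 with hx0def
  set xP := xb (Fin.last P) with hxPdef
  have hminlt : ∀ n : ℕ, min n P < P + 1 := fun n => by omega
  set X : ℕ → ℝ := fun n => xb ⟨min n P, hminlt n⟩ with hXdef
  set A : ℕ → ℝ := fun n => if h : n < P then a ⟨n, h⟩ else 0 with hAdef
  set B : ℕ → ℝ := fun n => if h : n < P then b ⟨n, h⟩ else 0 with hBdef
  have hAval : ∀ (n : ℕ) (h : n < P), A n = a ⟨n, h⟩ := by
    intro n h; simp only [hAdef]; rw [dif_pos h]
  have hBval : ∀ (n : ℕ) (h : n < P), B n = b ⟨n, h⟩ := by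
    intro n h; simp only [hBdef]; rw [dif_pos h]
  have hXmono : Monotone X := by
    intro m n hmn
    exact hmono (show (⟨min m P, hminlt m⟩ : Fin (P + 1)) ≤ ⟨min n P, hminlt n⟩ by
      simp only [Fin.mk_le_mk]; omega)
  have hX0 : X 0 = x0 := by
    simp only [hXdef]; congr 1
  have hXP : X P = xP := by
    simp only [hXdef, hxPdef]; congr 1; exact Fin.ext (by simp [Fin.last])
  have hxb1 : ∀ i : Fin P, xb i.castSucc = X i.val := by
    intro i
    simp only [hXdef]; congr 1
    exact Fin.ext (by have := i.isLt; simp [Fin.castSucc]; try omega)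
  have hxb2 : ∀ i : Fin P, xb i.succ = X (i.val + 1) := by
    intro i
    simp only [hXdef]; congr 1
    exact Fin.ext (by have := i.isLt; simp [Fin.succ]; try omega)
  have hpieceX : ∀ (i : Fin P) (y : ℝ), X i.val ≤ y → y ≤ X (i.val + 1) →
      fstar y = A i.val * y + B i.val := by
    intro i y h1 h2
    rw [hAval i.val i.isLt, hBval i.val i.isLt]
    have hmem : y ∈ Set.Icc (xb i.castSucc) (xb i.succ) := by
      rw [hxb1, hxb2]; exact ⟨h1, h2⟩
    have := hpieces i y hmem
    simpa using this
  have hcont : ∀ j : ℕ, j + 1 < P →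
      A j * X (j + 1) + B j = A (j + 1) * X (j + 1) + B (j + 1) := by
    intro j hj
    have h1 : fstar (X (j + 1)) = A j * X (j + 1) + B j :=
      hpieceX ⟨j, by omega⟩ (X (j + 1)) (hXmono (Nat.le_succ j)) le_rfl
    have h2 : fstar (X (j + 1)) = A (j + 1) * X (j + 1) + B (j + 1) :=
      hpieceX ⟨j + 1, hj⟩ (X (j + 1)) le_rfl (hXmono (Nat.le_succ (j + 1)))
    rw [← h1, ← h2]
  set F : ℕ → ℝ → ℝ := fun k x =>
    A 0 * x + B 0 + ∑ j ∈ Finset.range k, (A (j + 1) - A j) * max (x - X (j + 1)) 0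
    with hFdef
  have hFstep : ∀ (k : ℕ) (x : ℝ),
      F (k + 1) x = F k x + (A (k + 1) - A k) * max (x - X (k + 1)) 0 := by
    intro k x
    simp only [hFdef]
    rw [Finset.sum_range_succ]
    ring
  have haff : ∀ i : ℕ, i < P → ∀ x : ℝ,
      A 0 * x + B 0 + ∑ j ∈ Finset.range i, (A (j + 1) - A j) * (x - X (j + 1))
        = A i * x + B i := by
    intro i
    induction i with
    | zero => intro _ x; simp
    | succ i ih =>
      intro hi x
      have h1 := ih (by omega) x
      have h2 := hcont i hi
      rw [Finset.sum_range_succ]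
      linear_combination h1 + h2
  have hFeq : ∀ y : ℝ, x0 ≤ y → y ≤ xP → F (P - 1) y = fstar y := by
    intro y hy1 hy2
    set i := Nat.findGreatest (fun n => X n ≤ y) (P - 1) with hidef
    have hp0 : X 0 ≤ y := by rw [hX0]; exact hy1
    have hiX : X i ≤ y :=
      Nat.findGreatest_spec (P := fun n => X n ≤ y) (Nat.zero_le _) hp0
    have hile : i ≤ P - 1 := Nat.findGreatest_le _
    have hiP : i < P := by omega
    have hyX : y ≤ X (i + 1) := by
      rcases lt_or_eq_of_le hile with hl | he
      · by_contra hcon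
        push_neg at hcon
        exact Nat.findGreatest_is_greatest (by omega : i < i + 1)
          (by omega : i + 1 ≤ P - 1) (le_of_lt hcon)
      · have hXe : X (i + 1) = xP := by
          rw [show i + 1 = P by omega, hXP]
        rw [hXe]; exact hy2
    have hfy : fstar y = A i * y + B i := hpieceX ⟨i, hiP⟩ y hiX hyX
    have hsum : ∑ j ∈ Finset.range (P - 1), (A (j + 1) - A j) * max (y - X (j + 1)) 0
        = ∑ j ∈ Finset.range i, (A (j + 1) - A j) * (y - X (j + 1)) := by
      rw [← Finset.sum_subset (Finset.range_subset_range.2 (by omega : i ≤ P - 1))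
        (fun j _ hji => by
          have hij : i ≤ j := by
            by_contra hc
            exact hji (Finset.mem_range.2 (by omega))
          have hyj : y ≤ X (j + 1) := le_trans hyX (hXmono (by omega))
          rw [max_eq_right (by linarith), mul_zero])]
      refine Finset.sum_congr rfl ?_
      intro j hj
      have hji : j < i := Finset.mem_range.1 hj
      have hjy : X (j + 1) ≤ y := le_trans (hXmono (by omega : j + 1 ≤ i)) hiX
      rw [max_eq_left (by linarith)]
    have hFv : F (P - 1) y = A i * y + B i := by
      simp only [hFdef]
      rw [hsum]
      exact haff i hiP y
    rw [hFv, hfy]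
  -- the network, by induction on the number of pieces used
  have hnet : ∀ k : ℕ, k < P →
      ∃ (w₁ c₁ : Fin 2 → ℝ) (l : List (Matrix (Fin 2) (Fin 2) ℝ × (Fin 2 → ℝ))) (K : ℝ),
        ∀ x : ℝ, x0 ≤ x → x ≤ xP →
          reluLayers2 l (relu2 (fun i => w₁ i * x + c₁ i))
            = ![F k x - K, max (x - X (k + 1)) 0] := by
    intro k
    induction k with
    | zero =>
      intro _
      refine ⟨![A 0, 1], ![B 0 - (A 0 * x0 + B 0 - |A 0| * (xP - x0)), -(X 1)], [],
        A 0 * x0 + B 0 - |A 0| * (xP - x0), ?_⟩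
      intro x hx1 hx2
      have hF0 : F 0 x = A 0 * x + B 0 := by simp [hFdef]
      have hnn : 0 ≤ A 0 * x + (B 0 - (A 0 * x0 + B 0 - |A 0| * (xP - x0))) := by
        have k1 : -|A 0| * (x - x0) ≤ A 0 * (x - x0) :=
          mul_le_mul_of_nonneg_right (neg_abs_le _) (by linarith)
        have k2 : |A 0| * (x - x0) ≤ |A 0| * (xP - x0) :=
          mul_le_mul_of_nonneg_left (by linarith) (abs_nonneg _)
        nlinarith
      show reluLayers2 [] (relu2 (fun i =>
        ![A 0, 1] i * x + ![B 0 - (A 0 * x0 + B 0 - |A 0| * (xP - x0)), -(X 1)] i)) = _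
      rw [show reluLayers2 [] = id from rfl, id_eq, relu2_first]
      have c0 : max (A 0 * x + (B 0 - (A 0 * x0 + B 0 - |A 0| * (xP - x0)))) 0
          = F 0 x - (A 0 * x0 + B 0 - |A 0| * (xP - x0)) := by
        rw [max_eq_left hnn, hF0]
        ring
      have c1 : max (1 * x + -(X 1)) 0 = max (x - X 1) 0 := by
        congr 1; ring
      rw [c0, c1]
    | succ k ih =>
      intro hk
      obtain ⟨w₁, c₁, l, K, h⟩ := ih (by omega)
      set Δ := A (k + 1) - A k with hΔdef
      set M0 := max (xP - X (k + 1)) 0 with hM0def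
      set K' := K - |Δ| * M0 with hK'def
      refine ⟨w₁, c₁, l ++ [(!![1, Δ; 0, 1], ![K - K', X (k + 1) - X (k + 2)])], K', ?_⟩
      intro x hx1 hx2
      rw [reluLayers2_append, h x hx1 hx2, reluLayers2_single, relu2_layer]
      have hm0 : (0:ℝ) ≤ max (x - X (k + 1)) 0 := le_max_right _ _
      have hmM : max (x - X (k + 1)) 0 ≤ M0 := by
        rw [hM0def]
        exact max_le_max (by linarith) le_rfl
      have hFk : 0 ≤ F k x - K := by
        have hnn := reluLayers2_nonneg l (relu2 (fun i => w₁ i * x + c₁ i))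
          (fun i => le_max_right _ _) 0
        rw [h x hx1 hx2] at hnn
        simpa using hnn
      have hΔm : -( |Δ| * M0) ≤ Δ * max (x - X (k + 1)) 0 := by
        have k1 : -|Δ| * max (x - X (k + 1)) 0 ≤ Δ * max (x - X (k + 1)) 0 :=
          mul_le_mul_of_nonneg_right (neg_abs_le _) hm0
        have k2 : |Δ| * max (x - X (k + 1)) 0 ≤ |Δ| * M0 :=
          mul_le_mul_of_nonneg_left hmM (abs_nonneg _)
        nlinarith
      have c0 : max (F k x - K + Δ * max (x - X (k + 1)) 0 + (K - K')) 0
          = F (k + 1) x - K' := by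
        have hFs : F (k + 1) x = F k x + Δ * max (x - X (k + 1)) 0 := by
          rw [hΔdef]; exact hFstep k x
        rw [max_eq_left]
        · linarith [hFs]
        · linarith [hΔm, hFk, hK'def]
      have c1 : max (max (x - X (k + 1)) 0 + (X (k + 1) - X (k + 2))) 0
          = max (x - X (k + 2)) 0 := max_shift (hXmono (by omega))
      rw [c0, c1]
  obtain ⟨w₁, c₁, l, K, h⟩ := hnet (P - 1) (by omega)
  refine ⟨fun x => ![1, 0] ⬝ᵥ reluLayers2 l (relu2 (fun i => w₁ i * x + c₁ i)) + K,
    ⟨w₁, c₁, l, ![1, 0], K, fun x => rfl⟩, ?_⟩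
  intro y hy
  obtain ⟨hy1, hy2⟩ := hy
  show ![1, 0] ⬝ᵥ reluLayers2 l (relu2 (fun i => w₁ i * y + c₁ i)) + K = fstar y
  rw [h y hy1 hy2]
  have hFy := hFeq y hy1 hy2
  simp only [dotProduct, Fin.sum_univ_two, Matrix.cons_val_zero, Matrix.cons_val_one,
    Matrix.head_cons]
  linarith
end

section
/- Let σ : ℝ → ℝ be a continuous function that is the uniform limit on ℝ of a sequence of continuous injective functions φ_n. Then for any σ network f : [0,1]^{d_x} → ℝ^{d_y} of width w (a composition f = t_L ∘ φ_σ ∘ ⋯ ∘ φ_σ ∘ t₁ of affine maps of hidden dimension ≤ w with coordinatewise σ) and any ε > 0, there exist n and a φ_n network g of the same architecture (same affine maps, σ replaced by φ_n coordinatewise) such that sup_{x ∈ [0,1]^{d_x}} ‖f(x) − g(x)‖_∞ ≤ ε. -/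
open Matrix Filter

/-- Hidden layers of a width-`w` network with activation `act`: repeated `act ∘ affine`. -/
def actLayers (act : ℝ → ℝ) {w : ℕ} :
    List (Matrix (Fin w) (Fin w) ℝ × (Fin w → ℝ)) → (Fin w → ℝ) → (Fin w → ℝ)
  | [], v => v
  | (A, b) :: l, v => actLayers act l (fun i => act ((A.mulVec v + b) i))

/-- A width-`w` network with activation `act` and fixed affine data. -/
def netFwd (act : ℝ → ℝ) {dx dy w : ℕ} (W₀ : Matrix (Fin w) (Fin dx) ℝ) (b₀ : Fin w → ℝ)
    (l : List (Matrix (Fin w) (Fin w) ℝ × (Fin w → ℝ)))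
    (Wout : Matrix (Fin dy) (Fin w) ℝ) (bout : Fin dy → ℝ) (x : Fin dx → ℝ) : Fin dy → ℝ :=
  Wout.mulVec (actLayers act l (fun i => act ((W₀.mulVec x + b₀) i))) + bout

lemma row_bound {m k : ℕ} (A : Matrix (Fin m) (Fin k) ℝ) (u v : Fin k → ℝ) {δ : ℝ}
    (h : ∀ j, |u j - v j| ≤ δ) (i : Fin m) :
    |A.mulVec u i - A.mulVec v i| ≤ (∑ j, |A i j|) * δ := by
  have e : A.mulVec u i - A.mulVec v i = ∑ j, A i j * (u j - v j) := by
    simp [Matrix.mulVec, dotProduct, mul_sub, Finset.sum_sub_distrib]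
  rw [e]
  calc |∑ j, A i j * (u j - v j)| ≤ ∑ j, |A i j * (u j - v j)| :=
        Finset.abs_sum_le_sum_abs _ _
    _ ≤ ∑ j, |A i j| * δ := Finset.sum_le_sum fun j _ => by
        rw [abs_mul]; exact mul_le_mul_of_nonneg_left (h j) (abs_nonneg _)
    _ = (∑ j, |A i j|) * δ := (Finset.sum_mul _ _ _).symm

lemma rowsum_le {m k : ℕ} (A : Matrix (Fin m) (Fin k) ℝ) (i : Fin m) :
    (∑ j, |A i j|) ≤ (∑ i, ∑ j, |A i j|) + 1 := by
  have h1 : (∑ j, |A i j|) ≤ ∑ i, ∑ j, |A i j| :=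
    Finset.single_le_sum (f := fun i => ∑ j, |A i j|) (fun i _ => by positivity)
      (Finset.mem_univ i)
  linarith

lemma step_lemma (σ : ℝ → ℝ) (hσ : Continuous σ) (φ : ℕ → ℝ → ℝ)
    (hconv : TendstoUniformly (fun n => φ n) σ atTop)
    {dx m k : ℕ} {K : Set (Fin dx → ℝ)} (hK : IsCompact K)
    (A : Matrix (Fin m) (Fin k) ℝ) (b : Fin m → ℝ)
    (h : (Fin dx → ℝ) → Fin k → ℝ) (hh : Continuous h)
    (hn : ℕ → (Fin dx → ℝ) → Fin k → ℝ)
    (herr : ∀ ε > 0, ∀ᶠ n in atTop, ∀ x ∈ K, ∀ i, |h x i - hn n x i| ≤ ε) :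
    ∀ ε > 0, ∀ᶠ n in atTop, ∀ x ∈ K, ∀ i,
      |σ ((A.mulVec (h x) + b) i) - φ n ((A.mulVec (hn n x) + b) i)| ≤ ε := by
  intro ε hε
  have hU : Continuous fun x => A.mulVec (h x) + b :=
    (continuous_const.matrix_mulVec hh).add continuous_const
  obtain ⟨R, hR⟩ := hK.exists_bound_of_continuousOn hU.continuousOn
  have hUC := (isCompact_Icc : IsCompact (Set.Icc (-(R+1)) (R+1))).uniformContinuousOn_of_continuous
    hσ.continuousOn
  rw [Metric.uniformContinuousOn_iff] at hUC
  obtain ⟨δ, hδ, hδ'⟩ := hUC (ε/2) (half_pos hε)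
  set C : ℝ := (∑ i, ∑ j, |A i j|) + 1 with hC
  have hCpos : 0 < C := by positivity
  set η : ℝ := min (δ/2) 1 / C with hη
  have hmpos : (0:ℝ) < min (δ/2) 1 := lt_min (half_pos hδ) one_pos
  have hηpos : 0 < η := div_pos hmpos hCpos
  filter_upwards [herr η hηpos, (Metric.tendstoUniformly_iff.1 hconv) (ε/2) (half_pos hε)]
    with n h1 h2 x hx i
  set a := (A.mulVec (h x) + b) i with ha
  set c := (A.mulVec (hn n x) + b) i with hc
  have hac : |a - c| ≤ min (δ/2) 1 := by
    have e : a - c = A.mulVec (h x) i - A.mulVec (hn n x) i := by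
      simp [ha, hc]
    rw [e]
    calc |A.mulVec (h x) i - A.mulVec (hn n x) i| ≤ (∑ j, |A i j|) * η :=
          row_bound A _ _ (fun j => h1 x hx j) i
      _ ≤ C * η := mul_le_mul_of_nonneg_right (rowsum_le A i) hηpos.le
      _ = min (δ/2) 1 := by rw [hη]; field_simp
  have haR : |a| ≤ R := by
    have := hR x hx
    have h2' : |a| ≤ ‖A.mulVec (h x) + b‖ := by
      simpa [ha] using norm_le_pi_norm (A.mulVec (h x) + b) i
    linarith
  have hcR : |c| ≤ R + 1 := by
    have t1 : |c| - |a| ≤ |c - a| := abs_sub_abs_le_abs_sub c a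
    rw [abs_sub_comm] at t1
    have h1' : |a - c| ≤ 1 := hac.trans (min_le_right _ _)
    linarith
  have haS : a ∈ Set.Icc (-(R+1)) (R+1) := by
    rw [Set.mem_Icc]; constructor <;> [linarith [neg_abs_le a]; linarith [le_abs_self a]]
  have hcS : c ∈ Set.Icc (-(R+1)) (R+1) := by
    rw [Set.mem_Icc]; constructor <;> [linarith [neg_abs_le c]; linarith [le_abs_self c]]
  have h3 : dist (σ a) (σ c) < ε/2 := by
    apply hδ' a haS c hcS
    rw [Real.dist_eq]
    calc |a - c| ≤ δ/2 := hac.trans (min_le_left _ _)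
      _ < δ := by linarith
  have h4 : dist (σ c) (φ n c) < ε/2 := h2 c
  calc |σ a - φ n c| ≤ |σ a - σ c| + |σ c - φ n c| := abs_sub_le _ _ _
    _ ≤ ε/2 + ε/2 := by
        rw [Real.dist_eq] at h3 h4; exact add_le_add h3.le h4.le
    _ = ε := by ring

lemma layers_lemma (σ : ℝ → ℝ) (hσ : Continuous σ) (φ : ℕ → ℝ → ℝ)
    (hconv : TendstoUniformly (fun n => φ n) σ atTop)
    {dx w : ℕ} {K : Set (Fin dx → ℝ)} (hK : IsCompact K) :
    ∀ (l : List (Matrix (Fin w) (Fin w) ℝ × (Fin w → ℝ)))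
      (h : (Fin dx → ℝ) → Fin w → ℝ), Continuous h →
      ∀ (hn : ℕ → (Fin dx → ℝ) → Fin w → ℝ),
      (∀ ε > 0, ∀ᶠ n in atTop, ∀ x ∈ K, ∀ i, |h x i - hn n x i| ≤ ε) →
      Continuous (fun x => actLayers σ l (h x)) ∧
      (∀ ε > 0, ∀ᶠ n in atTop, ∀ x ∈ K, ∀ i,
        |actLayers σ l (h x) i - actLayers (φ n) l (hn n x) i| ≤ ε) := by
  intro l
  induction l with
  | nil => intro h hh hn herr; exact ⟨hh, herr⟩
  | cons p rest ih =>
    obtain ⟨A, b⟩ := p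
    intro h hh hn herr
    have hU : Continuous fun x => A.mulVec (h x) + b :=
      (continuous_const.matrix_mulVec hh).add continuous_const
    have hh' : Continuous fun x => (fun i => σ ((A.mulVec (h x) + b) i)) :=
      continuous_pi fun i => hσ.comp ((continuous_apply i).comp hU)
    exact ih (fun x i => σ ((A.mulVec (h x) + b) i)) hh'
      (fun n x i => φ n ((A.mulVec (hn n x) + b) i))
      (step_lemma σ hσ φ hconv hK A b h hh hn herr)

/-- If `σ` is the uniform limit on `ℝ` of continuous injections `φ_n`,
then every `σ` network of width `w` on `[0,1]^{d_x}` can be uniformly approximated within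
any `ε > 0` by the `φ_n` network with the same affine layers, for `n` large enough. -/
theorem stmt18 (σ : ℝ → ℝ) (hσ : Continuous σ) (φ : ℕ → ℝ → ℝ)
    (hφc : ∀ n, Continuous (φ n)) (hφi : ∀ n, Function.Injective (φ n))
    (hconv : TendstoUniformly (fun n => φ n) σ Filter.atTop)
    (dx dy w : ℕ) (W₀ : Matrix (Fin w) (Fin dx) ℝ) (b₀ : Fin w → ℝ)
    (l : List (Matrix (Fin w) (Fin w) ℝ × (Fin w → ℝ)))
    (Wout : Matrix (Fin dy) (Fin w) ℝ) (bout : Fin dy → ℝ)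
    (ε : ℝ) (hε : 0 < ε) :
    ∃ n : ℕ, ∀ x : Fin dx → ℝ, (∀ i, x i ∈ Set.Icc (0:ℝ) 1) →
      ∀ i : Fin dy,
        |netFwd σ W₀ b₀ l Wout bout x i - netFwd (φ n) W₀ b₀ l Wout bout x i| ≤ ε := by
  set K : Set (Fin dx → ℝ) := {x | ∀ i, x i ∈ Set.Icc (0:ℝ) 1} with hKdef
  have hK : IsCompact K := by
    have hKeq : K = Set.pi Set.univ (fun _ : Fin dx => Set.Icc (0:ℝ) 1) := by
      ext x; simp only [hKdef, Set.mem_setOf_eq, Set.mem_univ_pi]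
    rw [hKeq]
    exact isCompact_univ_pi fun _ => isCompact_Icc
  have hU0 : Continuous fun x : Fin dx → ℝ => W₀.mulVec x + b₀ :=
    (continuous_const.matrix_mulVec continuous_id).add continuous_const
  have hh : Continuous fun x : Fin dx → ℝ => (fun i => σ ((W₀.mulVec x + b₀) i)) :=
    continuous_pi fun i => hσ.comp ((continuous_apply i).comp hU0)
  have hbase : ∀ ε > 0, ∀ᶠ n in Filter.atTop, ∀ x ∈ K, ∀ i : Fin w,
      |σ ((W₀.mulVec x + b₀) i) - φ n ((W₀.mulVec x + b₀) i)| ≤ ε := by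
    intro ε' hε'
    filter_upwards [(Metric.tendstoUniformly_iff.1 hconv) ε' hε'] with n h2 x hx i
    have := h2 ((W₀.mulVec x + b₀) i)
    rw [Real.dist_eq] at this
    exact this.le
  obtain ⟨hc, herr⟩ := layers_lemma σ hσ φ hconv hK l
    (fun x i => σ ((W₀.mulVec x + b₀) i)) hh
    (fun n x i => φ n ((W₀.mulVec x + b₀) i)) hbase
  set Cout : ℝ := (∑ i, ∑ j, |Wout i j|) + 1 with hCout
  have hCpos : 0 < Cout := by positivity
  have := herr (ε / Cout) (by positivity)
  rw [Filter.eventually_atTop] at this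
  obtain ⟨N, hN⟩ := this
  refine ⟨N, fun x hx i => ?_⟩
  have hNx := hN N le_rfl x hx
  show |netFwd σ W₀ b₀ l Wout bout x i - netFwd (φ N) W₀ b₀ l Wout bout x i| ≤ ε
  unfold netFwd
  have e : (Wout.mulVec (actLayers σ l fun i => σ ((W₀.mulVec x + b₀) i)) + bout) i -
      (Wout.mulVec (actLayers (φ N) l fun i => φ N ((W₀.mulVec x + b₀) i)) + bout) i =
      Wout.mulVec (actLayers σ l fun i => σ ((W₀.mulVec x + b₀) i)) i -
      Wout.mulVec (actLayers (φ N) l fun i => φ N ((W₀.mulVec x + b₀) i)) i := by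
    simp
  rw [e]
  calc |Wout.mulVec (actLayers σ l fun i => σ ((W₀.mulVec x + b₀) i)) i -
      Wout.mulVec (actLayers (φ N) l fun i => φ N ((W₀.mulVec x + b₀) i)) i|
      ≤ (∑ j, |Wout i j|) * (ε / Cout) := row_bound Wout _ _ (fun j => hNx j) i
    _ ≤ Cout * (ε / Cout) :=
        mul_le_mul_of_nonneg_right (rowsum_le Wout i) (by positivity)
    _ = ε := by field_simp
end
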